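/- arXiv:1406.5925 — 10 statements merged into one kernel-verified Lean document; each statement's English description precedes it below -/
import Mathlib

section
/- Let R be a ring (associative with identity, not necessarily commutative). Then R is uniquely weakly nil-clean if and only if: (1) R is abelian; (2) J(R) is a nil ideal; and (3) R/J(R) is isomorphic (as a ring) to one of the following: ℤ/3ℤ, a Boolean ring, or ℤ/3ℤ × B where B is a Boolean ring. -/
universe u v

/-- An element `e` is a very idempotent if `e` or `-e` is an idempotent. -/
def IsVeryIdempotent {R : Type u} [Ring R] (e : R) : Prop :=
  IsIdempotentElem e ∨ IsIdempotentElem (-e)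

/-- `a` is uniquely weakly nil-clean: it is a sum of a nilpotent and a very idempotent,
and for any two such representations `a = w₁ + e₁ = w₂ + e₂` one has `e₁ ^ 2 = e₂ ^ 2`. -/
def IsUniquelyWeaklyNilClean {R : Type u} [Ring R] (a : R) : Prop :=
  (∃ w e : R, IsNilpotent w ∧ IsVeryIdempotent e ∧ a = w + e) ∧
  ∀ w₁ e₁ w₂ e₂ : R, IsNilpotent w₁ → IsVeryIdempotent e₁ → IsNilpotent w₂ →
    IsVeryIdempotent e₂ → a = w₁ + e₁ → a = w₂ + e₂ → e₁ ^ 2 = e₂ ^ 2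

/-- A ring is uniquely weakly nil-clean if every element is. -/
def UniquelyWeaklyNilCleanRing (R : Type u) [Ring R] : Prop :=
  ∀ a : R, IsUniquelyWeaklyNilClean a

/-- `a` is uniquely nil-clean: it is a sum of a nilpotent and an idempotent,
and for any two such representations `a = w₁ + e₁ = w₂ + e₂` one has `e₁ = e₂`. -/
def IsUniquelyNilClean {R : Type u} [Ring R] (a : R) : Prop :=
  (∃ w e : R, IsNilpotent w ∧ IsIdempotentElem e ∧ a = w + e) ∧
  ∀ w₁ e₁ w₂ e₂ : R, IsNilpotent w₁ → IsIdempotentElem e₁ → IsNilpotent w₂ →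
    IsIdempotentElem e₂ → a = w₁ + e₁ → a = w₂ + e₂ → e₁ = e₂

/-- A ring is uniquely nil-clean if every element is. -/
def UniquelyNilCleanRing (R : Type u) [Ring R] : Prop :=
  ∀ a : R, IsUniquelyNilClean a

/-- `a` is a zero-divisor: there are nonzero `b, c` with `a * b = 0` and `c * a = 0`. -/
def IsZeroDivisorPair {R : Type u} [Ring R] (a : R) : Prop :=
  ∃ b c : R, b ≠ 0 ∧ c ≠ 0 ∧ a * b = 0 ∧ c * a = 0

/-- A ring is abelian if every idempotent is central. -/
def AbelianRing (R : Type u) [Ring R] : Prop :=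
  ∀ e : R, IsIdempotentElem e → ∀ x : R, e * x = x * e

/-- A ring is periodic if every element satisfies `a ^ m = a ^ n` for distinct positive `m, n`. -/
def PeriodicRing (R : Type u) [Ring R] : Prop :=
  ∀ a : R, ∃ m n : ℕ, 0 < m ∧ 0 < n ∧ m ≠ n ∧ a ^ m = a ^ n

/-- A Boolean ring: every element is idempotent. -/
def IsBooleanRing (R : Type u) [Ring R] : Prop :=
  ∀ a : R, IsIdempotentElem a

/-- `R / J(R)` is isomorphic to `S`, expressed via a surjective ring homomorphism
whose kernel is exactly the Jacobson radical of `R`. -/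
def QuotJacobsonIsoTo (R : Type u) [Ring R] (S : Type v) [Ring S] : Prop :=
  ∃ f : R →+* S, Function.Surjective f ∧
    ∀ a : R, f a = 0 ↔ a ∈ Ideal.jacobson (⊥ : Ideal R)

section Basic

variable {R : Type u} [Ring R]

lemma red_of_sq {X : Type v} [MonoidWithZero X] (h : ∀ x : X, x * x = 0 → x = 0) :
    ∀ (n : ℕ) (x : X), x ^ n = 0 → x = 0 := by
  intro n
  induction n using Nat.strong_induction_on with
  | _ n ih =>
    intro x hx
    match n with
    | 0 =>
      have h1 : (1 : X) = 0 := by simpa using hx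
      calc x = x * 1 := (mul_one x).symm
      _ = x * 0 := by rw [h1]
      _ = 0 := mul_zero x
    | 1 => simpa using hx
    | (k+2) =>
      have h2 : (x ^ (k+1)) * (x ^ (k+1)) = 0 := by
        rw [← pow_add]
        have : k + 1 + (k + 1) = (k + 2) + k := by omega
        rw [this, pow_add, hx, zero_mul]
      exact ih (k+1) (by omega) x (h _ h2)

lemma very_cube {e : R} (he : IsVeryIdempotent e) : e * e * e = e := by
  rcases he with h | h
  · rw [h.eq, h.eq]
  · have h2 : e * e = -e := by
      have := h.eq
      simpa [neg_mul, mul_neg] using this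
    rw [h2, neg_mul, h2, neg_neg]

lemma very_pm {e : R} (he : IsVeryIdempotent e) : e = e * e ∨ e = -(e * e) := by
  rcases he with h | h
  · exact Or.inl h.eq.symm
  · right
    have h2 : e * e = -e := by
      have := h.eq
      simpa [neg_mul, mul_neg] using this
    rw [h2, neg_neg]

lemma very_sq_idem {e : R} (he : IsVeryIdempotent e) : (e * e) * (e * e) = e * e := by
  have h3 := very_cube he
  calc (e * e) * (e * e) = ((e * e) * e) * e := by rw [mul_assoc, mul_assoc, mul_assoc]
  _ = e * e := by rw [h3]

lemma central_mul {e : R} (hc : ∀ x, e * x = x * e) : ∀ x, (e * e) * x = x * (e * e) := by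
  intro x
  rw [mul_assoc e e x, hc (e*x), hc x, mul_assoc]

lemma central_idem_pow {f : R} (hf : f * f = f) (hfc : ∀ x, f * x = x * f) (x : R) :
    ∀ n : ℕ, 0 < n → (f * x) ^ n = f * x ^ n := by
  intro n hn
  induction n with
  | zero => omega
  | succ k ih =>
    rcases Nat.eq_zero_or_pos k with hk | hk
    · subst hk; simp
    · calc (f * x) ^ (k+1) = (f * x ^ k) * (f * x) := by rw [pow_succ, ih hk]
      _ = f * ((x ^ k * f) * x) := by rw [mul_assoc, ← mul_assoc (x^k) f x]
      _ = f * ((f * x ^ k) * x) := by rw [← hfc]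
      _ = (f * f) * (x ^ k * x) := by rw [← mul_assoc, ← mul_assoc, mul_assoc (f*f)]
      _ = f * x ^ (k+1) := by rw [hf, pow_succ]

lemma idem_sub_cube {f₁ f₂ : R} (h₁ : f₁ * f₁ = f₁) (h₂ : f₂ * f₂ = f₂)
    (hc : f₁ * f₂ = f₂ * f₁) : (f₁ - f₂) * ((f₁ - f₂) * (f₁ - f₂)) = f₁ - f₂ := by
  have e2 : f₁ * (f₁ * f₂) = f₁ * f₂ := by rw [← mul_assoc, h₁]
  have e3 : f₂ * (f₁ * f₂) = f₁ * f₂ := by rw [← mul_assoc, ← hc, mul_assoc, h₂]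
  have e1 : (f₁ - f₂) * (f₁ - f₂) = f₁ + f₂ - (f₁ * f₂ + f₁ * f₂) := by
    rw [sub_mul, mul_sub, mul_sub, h₁, h₂, ← hc]; abel
  rw [e1]
  calc (f₁ - f₂) * (f₁ + f₂ - (f₁ * f₂ + f₁ * f₂))
      = f₁ * f₁ + f₁ * f₂ - (f₁ * (f₁*f₂) + f₁ * (f₁*f₂))
        - (f₂ * f₁ + f₂ * f₂ - (f₂ * (f₁*f₂) + f₂ * (f₁*f₂))) := by noncomm_ring
  _ = f₁ - f₂ := by rw [h₁, h₂, e2, e3, ← hc]; abel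

lemma nilpotent_cube_self {d : R} (hd : IsNilpotent d) (h3 : d * (d * d) = d) : d = 0 := by
  obtain ⟨n, hn⟩ := hd
  have key : ∀ k : ℕ, d = d ^ (2 * k + 1) := by
    intro k
    induction k with
    | zero => simp
    | succ m ih =>
      have h1 : d ^ (2 * (m+1) + 1) = d := by
        calc d ^ (2*(m+1)+1) = d ^ (2*m+1) * (d * d) := by
              rw [show 2*(m+1)+1 = (2*m+1)+2 from by omega, pow_add, pow_two]
        _ = d * (d * d) := by rw [← ih]
        _ = d := h3
      exact h1.symm
  rw [key n, show 2*n+1 = n + (n+1) by omega, pow_add, hn, zero_mul]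

end Basic

section Sq
variable {R : Type u} [Ring R]

-- u := e*x - e*(x*e)
lemma sq_facts_right {e x : R} (he : e * e = e) :
    (e*x - e*(x*e)) * (e*x - e*(x*e)) = 0 ∧
    e * (e*x - e*(x*e)) = e*x - e*(x*e) ∧ (e*x - e*(x*e)) * e = 0 := by
  set u := e*x - e*(x*e) with hu
  have hue : u * e = 0 := by
    rw [hu, sub_mul, mul_assoc, mul_assoc, mul_assoc, he, sub_self]
  have heu : e * u = u := by
    rw [hu, mul_sub, ← mul_assoc, ← mul_assoc, he]
  have huu : u * u = 0 := by
    calc u * u = u * (e * u) := by rw [heu]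
    _ = (u * e) * u := by rw [mul_assoc]
    _ = 0 := by rw [hue, zero_mul]
  exact ⟨huu, heu, hue⟩

-- v := x*e - e*(x*e)
lemma sq_facts_left {e x : R} (he : e * e = e) :
    (x*e - e*(x*e)) * (x*e - e*(x*e)) = 0 ∧
    e * (x*e - e*(x*e)) = 0 ∧ (x*e - e*(x*e)) * e = x*e - e*(x*e) := by
  set v := x*e - e*(x*e) with hv
  have hev : e * v = 0 := by
    rw [hv, mul_sub, ← mul_assoc e e (x*e), he, sub_self]
  have hve : v * e = v := by
    rw [hv, sub_mul, mul_assoc x e e, he, mul_assoc, mul_assoc, he]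
  have hvv : v * v = 0 := by
    calc v * v = (v * e) * v := by rw [hve]
    _ = v * (e * v) := by rw [mul_assoc]
    _ = 0 := by rw [hev, mul_zero]
  exact ⟨hvv, hev, hve⟩

lemma uwnc_abelian {R : Type u} [Ring R] (h : UniquelyWeaklyNilCleanRing R) :
    AbelianRing R := by
  intro e he x
  obtain ⟨huu, heu, hue⟩ := sq_facts_right (x := x) he.eq
  obtain ⟨hvv, hev, hve⟩ := sq_facts_left (x := x) he.eq
  set u := e*x - e*(x*e) with hu
  set v := x*e - e*(x*e) with hv
  -- e + u is idempotent
  have hidem1 : (e + u) * (e + u) = e + u := by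
    rw [add_mul, mul_add, mul_add, he.eq, heu, hue, huu, add_zero, add_zero]
  have hidem2 : (e + v) * (e + v) = e + v := by
    rw [add_mul, mul_add, mul_add, he.eq, hev, hve, hvv, add_zero, add_zero]
  have hnu : IsNilpotent (-u) := ⟨2, by rw [pow_two, neg_mul_neg, huu]⟩
  have hnv : IsNilpotent (-v) := ⟨2, by rw [pow_two, neg_mul_neg, hvv]⟩
  have key1 : e ^ 2 = (e + u) ^ 2 :=
    (h e).2 0 e (-u) (e + u) ⟨1, by simp⟩ (Or.inl he) hnu (Or.inl hidem1)
      (by rw [zero_add]) (by abel)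
  have key2 : e ^ 2 = (e + v) ^ 2 :=
    (h e).2 0 e (-v) (e + v) ⟨1, by simp⟩ (Or.inl he) hnv (Or.inl hidem2)
      (by rw [zero_add]) (by abel)
  have hu0 : u = 0 := by
    have : e = e + u := by
      calc e = e ^ 2 := by rw [pow_two, he.eq]
      _ = (e + u) ^ 2 := key1
      _ = e + u := by rw [pow_two, hidem1]
    exact (left_eq_add.mp this)
  have hv0 : v = 0 := by
    have : e = e + v := by
      calc e = e ^ 2 := by rw [pow_two, he.eq]
      _ = (e + v) ^ 2 := key2
      _ = e + v := by rw [pow_two, hidem2]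
    exact (left_eq_add.mp this)
  have h1 : e * x = e * (x * e) := by rwa [sub_eq_zero] at hu0
  have h2 : x * e = e * (x * e) := by rwa [sub_eq_zero] at hv0
  rw [h1, ← h2]

lemma abelian_very_central {R : Type u} [Ring R] (hA : AbelianRing R) {e : R}
    (he : IsVeryIdempotent e) (x : R) : e * x = x * e := by
  rcases he with h | h
  · exact hA e h x
  · have := hA (-e) h x
    rw [neg_mul, mul_neg, neg_inj] at this
    exact this

end Sq

section Forward
variable {R : Type u} [Ring R] (h : UniquelyWeaklyNilCleanRing R)

/-- If f is a central idempotent, w nilpotent, and f*w has a right inverse times c giving f,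
then f = 0. -/
lemma corner_zero {R : Type u} [Ring R] {f w c : R} (hf : f * f = f)
    (hfc : ∀ x, f * x = x * f) (hw : IsNilpotent w) (hc : (f * w) * c = f) : f = 0 := by
  obtain ⟨n, hn⟩ := hw
  have key : ∀ k : ℕ, f = (f * w ^ k) * c ^ k := by
    intro k
    induction k with
    | zero => simp
    | succ m ih =>
      have h1 : f * (w * c) = f := by rw [← mul_assoc, hc]
      have h2 : (f * w ^ (m+1)) * c ^ (m+1) = (f * w ^ m) * c ^ m := by
        calc (f * w ^ (m+1)) * c ^ (m+1)
            = (f * w ^ m) * (w * (c * c ^ m)) := by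
              rw [pow_succ w m, pow_succ' c m, ← mul_assoc f (w^m) w,
                mul_assoc (f * w^m) w (c * c^m)]
        _ = (w ^ m * f) * ((w * c) * c ^ m) := by
              rw [← hfc (w^m), ← mul_assoc w c (c^m)]
        _ = w ^ m * ((f * (w * c)) * c ^ m) := by
              rw [mul_assoc (w^m) f ((w*c) * c^m), ← mul_assoc f (w*c) (c^m)]
        _ = (w ^ m * f) * c ^ m := by rw [h1, mul_assoc]
        _ = (f * w ^ m) * c ^ m := by rw [← hfc (w^m)]
      rw [h2]
      exact ih
  have := key n
  rw [hn, mul_zero, zero_mul] at this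
  exact this

lemma uwnc_mul_nilpotent {R : Type u} [Ring R] (h : UniquelyWeaklyNilCleanRing R)
    {w : R} (hw : IsNilpotent w) (y : R) : IsNilpotent (w * y) := by
  have hab := uwnc_abelian h
  obtain ⟨w', e', hw', he', heq⟩ := (h (w * y)).1
  have hcent : ∀ x, e' * x = x * e' := abelian_very_central hab he'
  set f := e' * e' with hfdef
  have hfidem : f * f = f := very_sq_idem he'
  have hfcent : ∀ x, f * x = x * f := central_mul hcent
  have hfe : f * e' = e' := very_cube he'
  -- f * w * y = f * w' + e'
  have hkey : (f * w) * y = f * w' + e' := by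
    calc (f * w) * y = f * (w * y) := by rw [mul_assoc]
    _ = f * (w' + e') := by rw [← heq]
    _ = f * w' + e' := by rw [mul_add, hfe]
  have hfw'nil : IsNilpotent (f * w') := by
    obtain ⟨m, hm⟩ := hw'
    refine ⟨m + 1, ?_⟩
    rw [central_idem_pow hfidem hfcent w' (m+1) (Nat.succ_pos m), pow_succ, hm, zero_mul, mul_zero]
  have hf0 : f = 0 := by
    rcases very_pm he' with hpm | hpm
    · -- e' = f
      obtain ⟨U, hU⟩ := IsNilpotent.isUnit_one_add hfw'nil
      have hcc : (f * w) * (y * ↑U⁻¹) = f := by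
        have h1 : (f * w) * y = f * ↑U := by
          rw [hkey, hU, mul_add, mul_one, ← mul_assoc f f w', hfidem, hpm, ← hfdef, add_comm]
        calc (f * w) * (y * ↑U⁻¹) = ((f * w) * y) * ↑U⁻¹ := by noncomm_ring
        _ = f * (↑U * ↑U⁻¹) := by rw [h1, mul_assoc]
        _ = f := by rw [U.mul_inv, mul_one]
      exact corner_zero hfidem hfcent hw hcc
    · -- e' = -f
      obtain ⟨U, hU⟩ := IsNilpotent.isUnit_one_sub hfw'nil
      have hcc : (f * w) * (-y * ↑U⁻¹) = f := by
        have h1 : (f * w) * (-y) = f * ↑U := by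
          rw [mul_neg, hkey, hU, mul_sub, mul_one, ← mul_assoc f f w', hfidem, hpm, ← hfdef]
          abel
        calc (f * w) * (-y * ↑U⁻¹) = ((f * w) * (-y)) * ↑U⁻¹ := by noncomm_ring
        _ = f * (↑U * ↑U⁻¹) := by rw [h1, mul_assoc]
        _ = f := by rw [U.mul_inv, mul_one]
      exact corner_zero hfidem hfcent hw hcc
  have : e' = 0 := by
    rcases very_pm he' with hpm | hpm
    · rw [hpm, ← hfdef, hf0]
    · rw [hpm, ← hfdef, hf0, neg_zero]
  rw [heq, this, add_zero]
  exact hw'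

lemma nilpotent_swap {R : Type u} [Ring R] {a b : R} (h : IsNilpotent (a * b)) :
    IsNilpotent (b * a) := by
  obtain ⟨n, hn⟩ := h
  have key : ∀ k : ℕ, (b * a) ^ (k + 1) = b * ((a * b) ^ k * a) := by
    intro k
    induction k with
    | zero => simp
    | succ m ih =>
      calc (b*a) ^ (m+2) = (b*a)^(m+1) * (b*a) := by rw [pow_succ]
      _ = (b * ((a*b)^m * a)) * (b * a) := by rw [ih]
      _ = b * ((a*b)^m * ((a*b) * a)) := by noncomm_ring
      _ = b * ((a*b)^(m+1) * a) := by rw [← mul_assoc ((a*b)^m), ← pow_succ]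
  exact ⟨n + 1, by rw [key n, hn, zero_mul, mul_zero]⟩

lemma isUnit_one_sub_of_mem_jacobson {R : Type u} [Ring R] {a : R}
    (ha : a ∈ Ideal.jacobson (⊥ : Ideal R)) : IsUnit (1 - a) := by
  have hleft : ∀ b ∈ Ideal.jacobson (⊥ : Ideal R), ∃ z : R, z * (1 - b) = 1 := by
    intro b hb
    obtain ⟨z, hz⟩ := Ideal.mem_jacobson_iff.1 hb (-1)
    rw [Ideal.mem_bot] at hz
    refine ⟨z, ?_⟩
    calc z * (1 - b) = (z * -1 * b + z - 1) + 1 := by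
          rw [mul_sub, mul_one, mul_neg_one, neg_mul]; abel
    _ = 1 := by rw [hz, zero_add]
  obtain ⟨z₁, hz₁⟩ := hleft a ha
  have hz₁eq : z₁ = 1 + z₁ * a := by
    have : z₁ - z₁ * a = 1 := by rw [← hz₁, mul_sub, mul_one]
    calc z₁ = (z₁ - z₁ * a) + z₁ * a := by abel
    _ = 1 + z₁ * a := by rw [this]
  have hmem : -(z₁ * a) ∈ Ideal.jacobson (⊥ : Ideal R) :=
    neg_mem (Ideal.mul_mem_left _ z₁ ha)
  obtain ⟨z₂, hz₂⟩ := hleft _ hmem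
  rw [sub_neg_eq_add, ← hz₁eq] at hz₂
  -- z₂ * z₁ = 1  and z₁ * (1 - a) = 1
  have h2 : z₂ = 1 - a := by
    calc z₂ = z₂ * (z₁ * (1 - a)) := by rw [hz₁, mul_one]
    _ = (z₂ * z₁) * (1 - a) := by rw [mul_assoc]
    _ = 1 - a := by rw [hz₂, one_mul]
  exact ⟨⟨1 - a, z₁, by rw [← h2]; exact hz₂, hz₁⟩, rfl⟩

lemma uwnc_nil_mem_jacobson {R : Type u} [Ring R] (h : UniquelyWeaklyNilCleanRing R)
    {w : R} (hw : IsNilpotent w) : w ∈ Ideal.jacobson (⊥ : Ideal R) := by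
  rw [Ideal.mem_jacobson_iff]
  intro y
  have hyw : IsNilpotent (y * w) := nilpotent_swap (uwnc_mul_nilpotent h hw y)
  obtain ⟨U, hU⟩ := hyw.isUnit_one_add
  refine ⟨↑U⁻¹, ?_⟩
  rw [Ideal.mem_bot]
  have : (↑U⁻¹ : R) * ↑U = 1 := U.inv_mul
  calc ↑U⁻¹ * y * w + ↑U⁻¹ - 1 = ↑U⁻¹ * (1 + y * w) - 1 := by
        rw [mul_add, mul_one, mul_assoc]; abel
  _ = 0 := by rw [← hU, this, sub_self]

lemma uwnc_jacobson_nil {R : Type u} [Ring R] (h : UniquelyWeaklyNilCleanRing R) :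
    ∀ a ∈ Ideal.jacobson (⊥ : Ideal R), IsNilpotent a := by
  intro a ha
  obtain ⟨w, e, hw, he, heq⟩ := (h a).1
  have hcent := abelian_very_central (uwnc_abelian h) he
  set f := e * e with hfdef
  have hfidem : f * f = f := very_sq_idem he
  have hfcent : ∀ x, f * x = x * f := central_mul hcent
  have hfe : f * e = e := very_cube he
  have hwa : w = a - e := by rw [heq]; abel
  obtain ⟨m, hm⟩ := hw
  have hm1 : w ^ (m+1) = 0 := by rw [pow_succ, hm, zero_mul]
  rcases very_pm he with hpm | hpm
  · -- e = f
    have hef : e = f := by rw [hpm]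
    obtain ⟨U, hU⟩ := isUnit_one_sub_of_mem_jacobson ha
    have hkey : f * ↑U = -(f * w) := by
      rw [hU, hwa, mul_sub, mul_sub, mul_one, hfe, ← hef]; abel
    have hpow : f * (↑U : R)^(m+1) = 0 := by
      rw [← central_idem_pow hfidem hfcent (↑U) (m+1) (Nat.succ_pos m), hkey, neg_pow,
        central_idem_pow hfidem hfcent w (m+1) (Nat.succ_pos m), hm1, mul_zero, mul_zero]
    have hf0 : f = 0 := by
      have h2 : (↑(U^(m+1)) : R) = (↑U : R)^(m+1) := Units.val_pow_eq_pow_val U (m+1)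
      calc f = f * ↑(U^(m+1)) * ↑(U^(m+1))⁻¹ := by rw [mul_assoc, Units.mul_inv, mul_one]
      _ = 0 := by rw [h2, hpow, zero_mul]
    have he0 : e = 0 := by rw [hef, hf0]
    exact ⟨m+1, by rw [heq, he0, add_zero]; exact hm1⟩
  · -- e = -f
    have hef : e = -f := by rw [hpm]
    have ha' : -a ∈ Ideal.jacobson (⊥ : Ideal R) := neg_mem ha
    obtain ⟨U, hU⟩ := isUnit_one_sub_of_mem_jacobson ha'
    rw [sub_neg_eq_add] at hU
    have hkey : f * ↑U = f * w := by
      rw [hU, hwa, mul_add, mul_one, mul_sub, hfe, hef]; abel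
    have hpow : f * (↑U : R)^(m+1) = 0 := by
      rw [← central_idem_pow hfidem hfcent (↑U) (m+1) (Nat.succ_pos m), hkey,
        central_idem_pow hfidem hfcent w (m+1) (Nat.succ_pos m), hm1, mul_zero]
    have hf0 : f = 0 := by
      have h2 : (↑(U^(m+1)) : R) = (↑U : R)^(m+1) := Units.val_pow_eq_pow_val U (m+1)
      calc f = f * ↑(U^(m+1)) * ↑(U^(m+1))⁻¹ := by rw [mul_assoc, Units.mul_inv, mul_one]
      _ = 0 := by rw [h2, hpow, zero_mul]
    have he0 : e = 0 := by rw [hef, hf0, neg_zero]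
    exact ⟨m+1, by rw [heq, he0, add_zero]; exact hm1⟩

end Forward

section Classify

lemma classify (S : Type u) [Ring S] (hvery : ∀ s : S, s * s = s ∨ s * s = -s) :
    (∀ s : S, s * s = s) ∨
    ∃ (B : Type u) (_ : Ring B) (g : S →+* ZMod 3 × B),
      (∀ b : B, b * b = b) ∧ Function.Bijective g := by
  have hsq0 : ∀ s : S, s * s = 0 → s = 0 := by
    intro s h
    rcases hvery s with h' | h'
    · exact h'.symm.trans h
    · exact neg_eq_zero.mp (h'.symm.trans h)
  have habel : ∀ e : S, e * e = e → ∀ x, e * x = x * e := by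
    intro e he x
    obtain ⟨huu, -, -⟩ := sq_facts_right (x := x) he
    obtain ⟨hvv, -, -⟩ := sq_facts_left (x := x) he
    have h1 := hsq0 _ huu
    have h2 := hsq0 _ hvv
    rw [sub_eq_zero] at h1 h2
    rw [h1, ← h2]
  have hcomm : ∀ a b : S, a * b = b * a := by
    intro a b
    rcases hvery a with h | h
    · exact habel a h b
    · have := habel (-a) (by rw [neg_mul_neg]; exact h) b
      rw [neg_mul, mul_neg, neg_inj] at this
      exact this
  letI : CommRing S := { (inferInstance : Ring S) with mul_comm := hcomm }
  by_cases h2 : (2 : S) = 0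
  · left
    intro s
    rcases hvery s with h | h
    · exact h
    · rw [h, neg_eq_iff_add_eq_zero]
      calc s + s = 2 * s := (two_mul s).symm
      _ = 0 := by rw [h2, zero_mul]
  · right
    have h6 : (6 : S) = 0 := by
      rcases hvery 2 with h | h
      · exact absurd (by linear_combination h) h2
      · linear_combination h
    set I2 : Ideal S := Ideal.span {(2:S)} with hI2
    set I3 : Ideal S := Ideal.span {(3:S)} with hI3
    let B := S ⧸ I2
    let T := S ⧸ I3
    let mk2 : S →+* B := Ideal.Quotient.mk I2
    let mk3 : S →+* T := Ideal.Quotient.mk I3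
    have hmk2surj : Function.Surjective mk2 := Ideal.Quotient.mk_surjective
    have hmk3surj : Function.Surjective mk3 := Ideal.Quotient.mk_surjective
    have h2B : (2 : B) = 0 := by
      have h1 : mk2 (2:S) = (2:B) := map_ofNat mk2 2
      rw [← h1]
      exact Ideal.Quotient.eq_zero_iff_mem.mpr (Ideal.subset_span rfl)
    have h3T : (3 : T) = 0 := by
      have h1 : mk3 (3:S) = (3:T) := map_ofNat mk3 3
      rw [← h1]
      exact Ideal.Quotient.eq_zero_iff_mem.mpr (Ideal.subset_span rfl)
    have hBbool : ∀ b : B, b * b = b := by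
      intro b
      obtain ⟨s, rfl⟩ := hmk2surj b
      rcases hvery s with h | h
      · rw [← map_mul, h]
      · rw [← map_mul, h, map_neg, neg_eq_iff_add_eq_zero]
        calc mk2 s + mk2 s = 2 * mk2 s := (two_mul _).symm
        _ = 0 := by rw [h2B, zero_mul]
    have hTnontriv : (1 : T) ≠ 0 := by
      intro h1
      apply h2
      have : (1:S) ∈ I3 := by
        rw [← map_one mk3] at h1
        exact Ideal.Quotient.eq_zero_iff_mem.mp h1
      obtain ⟨c, hc⟩ := Ideal.mem_span_singleton.mp this
      linear_combination 2 * hc + c * h6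
    haveI : Nontrivial T := ⟨1, 0, hTnontriv⟩
    have hvT : ∀ t : T, t * t = t ∨ t * t = -t := by
      intro t
      obtain ⟨s, rfl⟩ := hmk3surj t
      rcases hvery s with h | h
      · left; rw [← map_mul, h]
      · right; rw [← map_mul, h, map_neg]
    have hidemT : ∀ t : T, t * t = t → t = 0 ∨ t = 1 := by
      intro t ht
      have h31 : (3:T) * t = 0 := by rw [h3T, zero_mul]
      have hsq : (1 + t) * (1 + t) = 1 := by linear_combination ht + h31
      rcases hvT (1 + t) with h' | h'
      · left; linear_combination hsq - h'
      · right; linear_combination h' - hsq - h3T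
    have helts : ∀ t : T, t = 0 ∨ t = 1 ∨ t = -1 := by
      intro t
      rcases hvT t with h | h
      · rcases hidemT t h with h' | h'
        · exact Or.inl h'
        · exact Or.inr (Or.inl h')
      · rcases hidemT (-t) (by linear_combination h) with h' | h'
        · exact Or.inl (neg_eq_zero.mp h')
        · exact Or.inr (Or.inr (by linear_combination -h'))
    have hchar : ringChar T = 3 := by
      haveI := ringChar.charP T
      have hdvd : ringChar T ∣ 3 := ringChar.dvd h3T
      rcases (Nat.prime_three).eq_one_or_self_of_dvd _ hdvd with h1 | h1
      · exfalso
        have : ((1:ℕ) : T) = 0 := (CharP.cast_eq_zero_iff T (ringChar T) 1).mpr (by rw [h1])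
        rw [Nat.cast_one] at this
        exact hTnontriv this
      · exact h1
    haveI : CharP T 3 := hchar ▸ ringChar.charP T
    haveI : Fact (Nat.Prime 3) := ⟨Nat.prime_three⟩
    let castT : ZMod 3 →+* T := ZMod.castHom (dvd_refl 3) T
    have hinj : Function.Injective castT := castT.injective
    have hsurjT : Function.Surjective castT := by
      intro t
      rcases helts t with h | h | h
      · exact ⟨0, by rw [map_zero, h]⟩
      · exact ⟨1, by rw [map_one, h]⟩
      · exact ⟨-1, by rw [map_neg, map_one, h]⟩
    let equivT : ZMod 3 ≃+* T := RingEquiv.ofBijective castT ⟨hinj, hsurjT⟩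
    have hcap : ∀ s : S, s ∈ I2 → s ∈ I3 → s = 0 := by
      intro s hs2 hs3
      obtain ⟨u, hu⟩ := Ideal.mem_span_singleton.mp hs2
      obtain ⟨v, hv⟩ := Ideal.mem_span_singleton.mp hs3
      linear_combination 3 * hu - 2 * hv + (u - v) * h6
    have hcrt : ∀ (x : B) (y : T), ∃ s : S, mk2 s = x ∧ mk3 s = y := by
      intro x y
      obtain ⟨sb, rfl⟩ := hmk2surj x
      obtain ⟨st, rfl⟩ := hmk3surj y
      refine ⟨3 * sb + 4 * st, ?_, ?_⟩
      · rw [Ideal.Quotient.mk_eq_mk_iff_sub_mem]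
        exact Ideal.mem_span_singleton.mpr ⟨sb + 2 * st, by ring⟩
      · rw [Ideal.Quotient.mk_eq_mk_iff_sub_mem]
        exact Ideal.mem_span_singleton.mpr ⟨sb + st, by ring⟩
    let g : S →+* ZMod 3 × B := RingHom.prod (equivT.symm.toRingHom.comp mk3) mk2
    have hgapp : ∀ s : S, g s = (equivT.symm (mk3 s), mk2 s) := fun s => rfl
    have hginj : Function.Injective g := by
      rw [injective_iff_map_eq_zero]
      intro s hs
      rw [hgapp, Prod.mk_eq_zero] at hs
      obtain ⟨hs1, hs2⟩ := hs
      have h3 : mk3 s = 0 := by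
        have := congrArg equivT hs1
        rwa [RingEquiv.apply_symm_apply, map_zero] at this
      exact hcap s (Ideal.Quotient.eq_zero_iff_mem.mp hs2) (Ideal.Quotient.eq_zero_iff_mem.mp h3)
    have hgsurj : Function.Surjective g := by
      rintro ⟨z, x⟩
      obtain ⟨s, hsx, hsy⟩ := hcrt x (equivT z)
      refine ⟨s, ?_⟩
      rw [hgapp, hsx, hsy, RingEquiv.symm_apply_apply]
    exact ⟨B, inferInstance, g, hBbool, hginj, hgsurj⟩

end Classify

lemma jacobson_bot_mul_mem_right {R : Type u} [Ring R] {x : R}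
    (hx : x ∈ Ideal.jacobson (⊥ : Ideal R)) (r : R) :
    x * r ∈ Ideal.jacobson (⊥ : Ideal R) := by
  rw [Ideal.mem_jacobson_iff] at hx ⊢
  intro y
  obtain ⟨z, hz⟩ := hx (r * y)
  rw [Ideal.mem_bot] at hz
  refine ⟨1 - (y*x)*z*r, ?_⟩
  rw [Ideal.mem_bot]
  have h1 : z*(r*(y*x)) + z = 1 := by
    calc z*(r*(y*x)) + z = (z*(r*y)*x + z - 1) + 1 := by noncomm_ring
    _ = 1 := by rw [hz, zero_add]
  have h2 : (z*(r*(y*x)))*r + z*r = r := by rw [← add_mul, h1, one_mul]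
  calc (1 - (y*x)*z*r)*y*(x*r) + (1 - (y*x)*z*r) - 1
      = (y*x)*r - (y*x)*((z*(r*(y*x)))*r + z*r) := by noncomm_ring
  _ = 0 := by rw [h2]; noncomm_ring

def jacobsonCon (R : Type u) [Ring R] : RingCon R where
  r x y := x - y ∈ Ideal.jacobson (⊥ : Ideal R)
  iseqv :=
    { refl := fun x => by simp
      symm := fun {x y} h => by
        have := neg_mem h
        rwa [neg_sub] at this
      trans := fun {x y z} h1 h2 => by
        have := add_mem h1 h2
        rwa [sub_add_sub_cancel] at this }
  mul' := fun {a b c d} h1 h2 => by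
    have t1 : a * (c - d) ∈ Ideal.jacobson (⊥ : Ideal R) := Ideal.mul_mem_left _ a h2
    have t2 : (a - b) * d ∈ Ideal.jacobson (⊥ : Ideal R) := jacobson_bot_mul_mem_right h1 d
    have hsum := add_mem t1 t2
    have hid : a*(c-d) + (a-b)*d = a*c - b*d := by noncomm_ring
    rwa [hid] at hsum
  add' := fun {a b c d} h1 h2 => by
    have := add_mem h1 h2
    rwa [show a - b + (c - d) = a + c - (b + d) from by abel] at this

section Main

lemma forward_dir (R : Type u) [Ring R] (h : UniquelyWeaklyNilCleanRing R) :
    AbelianRing R ∧ (∀ a ∈ Ideal.jacobson (⊥ : Ideal R), IsNilpotent a) ∧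
      ((∃ f : R →+* ZMod 3, Function.Surjective f ∧
          ∀ a : R, f a = 0 ↔ a ∈ Ideal.jacobson (⊥ : Ideal R)) ∨
        (∃ (B : Type u) (_ : Ring B), (∀ b : B, b * b = b) ∧
          ∃ f : R →+* B, Function.Surjective f ∧
            ∀ a : R, f a = 0 ↔ a ∈ Ideal.jacobson (⊥ : Ideal R)) ∨
        (∃ (B : Type u) (_ : Ring B), (∀ b : B, b * b = b) ∧
          ∃ f : R →+* ZMod 3 × B, Function.Surjective f ∧
            ∀ a : R, f a = 0 ↔ a ∈ Ideal.jacobson (⊥ : Ideal R))) := by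
  have hJnil := uwnc_jacobson_nil h
  refine ⟨uwnc_abelian h, hJnil, ?_⟩
  let c := jacobsonCon R
  let π : R →+* c.Quotient := c.mk'
  have hπsurj : Function.Surjective π := fun x => Quot.inductionOn x fun a => ⟨a, rfl⟩
  have hπker : ∀ a : R, π a = 0 ↔ a ∈ Ideal.jacobson (⊥ : Ideal R) := by
    intro a
    have h1 : π a = (a : c.Quotient) := rfl
    rw [h1, ← RingCon.coe_zero, RingCon.eq]
    show a - 0 ∈ Ideal.jacobson (⊥ : Ideal R) ↔ _
    rw [sub_zero]
  have hred : ∀ s : c.Quotient, IsNilpotent s → s = 0 := by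
    rintro s ⟨n, hn⟩
    obtain ⟨a, rfl⟩ := hπsurj s
    have h1 : π (a ^ n) = 0 := by rw [map_pow]; exact hn
    obtain ⟨k, hk⟩ := hJnil _ ((hπker _).mp h1)
    have h2 : IsNilpotent a := ⟨n * k, by rw [pow_mul]; exact hk⟩
    exact (hπker a).mpr (uwnc_nil_mem_jacobson h h2)
  have hvery : ∀ s : c.Quotient, s * s = s ∨ s * s = -s := by
    intro s
    obtain ⟨a, rfl⟩ := hπsurj s
    obtain ⟨w, e, hw, he, heq⟩ := (h a).1
    have hpw : π w = 0 := hred _ (IsNilpotent.map hw π)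
    have hae : π a = π e := by rw [heq, map_add, hpw, zero_add]
    rcases very_pm he with hpm | hpm
    · left
      rw [hae, ← map_mul, ← hpm]
    · right
      have h1 : π e = -(π (e * e)) := by rw [← map_neg, ← hpm]
      rw [hae, ← map_mul, eq_comm, neg_eq_iff_eq_neg, ← h1]
  rcases classify c.Quotient hvery with hbool | ⟨B, ringB, g, hBbool, hgbij⟩
  · exact Or.inr (Or.inl ⟨c.Quotient, inferInstance, hbool, π, hπsurj, hπker⟩)
  · refine Or.inr (Or.inr ⟨B, ringB, hBbool, g.comp π, hgbij.2.comp hπsurj, fun a => ?_⟩)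
    rw [RingHom.comp_apply]
    constructor
    · intro h0
      exact (hπker a).mp (hgbij.1 (by rw [h0, map_zero]))
    · intro h0
      rw [(hπker a).mpr h0, map_zero]

end Main

section Backward

lemma backward_core {R : Type u} {X : Type v} [Ring R] [Ring X]
    (hab : AbelianRing R) (hJnil : ∀ a ∈ Ideal.jacobson (⊥ : Ideal R), IsNilpotent a)
    (f : R →+* X) (hsurj : Function.Surjective f)
    (hker : ∀ a : R, f a = 0 ↔ a ∈ Ideal.jacobson (⊥ : Ideal R))
    (hXvery : ∀ x : X, x * x = x ∨ x * x = -x)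
    (hXsq0 : ∀ x : X, x * x = 0 → x = 0) :
    UniquelyWeaklyNilCleanRing R := by
  have hknil : ∀ a ∈ RingHom.ker f, IsNilpotent a := fun a ha =>
    hJnil a ((hker a).1 (RingHom.mem_ker.mp ha))
  intro a
  constructor
  · -- existence
    rcases hXvery (f a) with hfa | hfa
    · obtain ⟨e, he, hfe⟩ :=
        exists_isIdempotentElem_eq_of_ker_isNilpotent f hknil (f a) ⟨a, rfl⟩ hfa
      refine ⟨a - e, e, ?_, Or.inl he, by abel⟩
      exact hJnil _ ((hker _).1 (by rw [map_sub, hfe, sub_self]))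
    · have hidem : IsIdempotentElem (f (-a)) := by
        show f (-a) * f (-a) = f (-a)
        rw [map_neg, neg_mul_neg, hfa]
      obtain ⟨e, he, hfe⟩ :=
        exists_isIdempotentElem_eq_of_ker_isNilpotent f hknil (f (-a)) ⟨-a, rfl⟩ hidem
      refine ⟨a + e, -e, ?_, Or.inr (by rwa [neg_neg]), by abel⟩
      refine hJnil _ ((hker _).1 ?_)
      rw [map_add, hfe, map_neg, add_neg_cancel]
  · -- uniqueness
    intro w₁ e₁ w₂ e₂ hw₁ he₁ hw₂ he₂ heq₁ heq₂
    have hcent₁ : ∀ x, e₁ * x = x * e₁ := abelian_very_central hab he₁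
    have hfw₁ : f w₁ = 0 := by
      obtain ⟨n, hn⟩ := hw₁
      exact red_of_sq hXsq0 n (f w₁) (by rw [← map_pow, hn, map_zero])
    have hfw₂ : f w₂ = 0 := by
      obtain ⟨n, hn⟩ := hw₂
      exact red_of_sq hXsq0 n (f w₂) (by rw [← map_pow, hn, map_zero])
    have hfe1 : f e₁ = f a := by rw [heq₁, map_add, hfw₁, zero_add]
    have hfe2 : f e₂ = f a := by rw [heq₂, map_add, hfw₂, zero_add]
    have hfe12 : f (e₁ * e₁) = f (e₂ * e₂) := by
      rw [map_mul, map_mul, hfe1, hfe2]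
    have hdnil : IsNilpotent (e₁ * e₁ - e₂ * e₂) :=
      hJnil _ ((hker _).1 (by rw [map_sub, hfe12, sub_self]))
    have hd3 := idem_sub_cube (very_sq_idem he₁) (very_sq_idem he₂)
      (central_mul hcent₁ (e₂ * e₂))
    have hd0 := nilpotent_cube_self hdnil hd3
    rw [pow_two, pow_two]
    exact sub_eq_zero.mp hd0

lemma bool_add_self {B : Type u} [Ring B] (hbool : ∀ b : B, b * b = b) (b : B) :
    b + b = 0 := by
  have h4 : (b + b) * (b + b) = (b + b) + (b + b) := by
    calc (b + b) * (b + b) = b*b + b*b + (b*b + b*b) := by noncomm_ring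
    _ = (b + b) + (b + b) := by rw [hbool b]
  have h5 := (hbool (b + b)).symm.trans h4
  exact left_eq_add.mp h5

end Backward

theorem stmt1 (R : Type u) [Ring R] :
    UniquelyWeaklyNilCleanRing R ↔
      AbelianRing R ∧ (∀ a ∈ Ideal.jacobson (⊥ : Ideal R), IsNilpotent a) ∧
        (QuotJacobsonIsoTo R (ZMod 3) ∨
          (∃ (B : Type u) (_ : Ring B), IsBooleanRing B ∧ QuotJacobsonIsoTo R B) ∨
          (∃ (B : Type u) (_ : Ring B), IsBooleanRing B ∧ QuotJacobsonIsoTo R (ZMod 3 × B))) := by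
  constructor
  · intro h
    obtain ⟨hab, hJ, hcase⟩ := forward_dir R h
    refine ⟨hab, hJ, ?_⟩
    rcases hcase with h1 | ⟨B, rB, hb, hf⟩ | ⟨B, rB, hb, hf⟩
    · exact Or.inl h1
    · exact Or.inr (Or.inl ⟨B, rB, hb, hf⟩)
    · exact Or.inr (Or.inr ⟨B, rB, hb, hf⟩)
  · rintro ⟨hab, hJnil, hcase⟩
    rcases hcase with ⟨f, hs, hk⟩ | ⟨B, rB, hbool, f, hs, hk⟩ | ⟨B, rB, hbool, f, hs, hk⟩
    · exact backward_core hab hJnil f hs hk (by decide) (by decide)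
    · exact backward_core hab hJnil f hs hk (fun x => Or.inl (hbool x))
        (fun x hx => ((hbool x).symm.trans hx))
    · refine backward_core hab hJnil f hs hk ?_ ?_
      · rintro ⟨z, b⟩
        have hz := (by decide : ∀ z : ZMod 3, z * z = z ∨ z * z = -z) z
        have hnb : -b = b := neg_eq_iff_add_eq_zero.mpr (bool_add_self hbool b)
        rcases hz with hz | hz
        · left
          rw [Prod.mk_mul_mk, hz, hbool b]
        · right
          rw [Prod.mk_mul_mk, hz, hbool b, Prod.neg_mk, hnb]
      · rintro ⟨z, b⟩ hx
        rw [Prod.mk_mul_mk, Prod.mk_eq_zero] at hx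
        obtain ⟨h1, h2⟩ := hx
        have hz0 : z = 0 := (by decide : ∀ z : ZMod 3, z * z = 0 → z = 0) z h1
        have hb0 : b = 0 := ((hbool b).symm.trans h2)
        rw [Prod.mk_eq_zero]
        exact ⟨hz0, hb0⟩
end

section
/- Let R be a ring (associative with identity, not necessarily commutative). Then R is uniquely weakly nil-clean if and only if: (1) R is periodic; (2) R is uniquely weakly D-nil-clean; and (3) the set of units of R equals { x + 1 : x nilpotent } ∪ { x - 1 : x nilpotent }. -/
universe u v

section Aux2
variable {R : Type u} [Ring R]

lemma uwnc_centIdem_pow' (x c : R) (hc : c * c = c) (hcm : ∀ y : R, c * y = y * c) :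
    ∀ n : ℕ, (x * c) ^ (n + 1) = x ^ (n + 1) * c := by
  intro n
  induction n with
  | zero => simp
  | succ k ih =>
    rw [pow_succ, ih, mul_assoc, ← mul_assoc c x c, hcm x, mul_assoc x c c, hc,
      ← mul_assoc, ← pow_succ]

lemma uwnc_abelian_s2 (h : ∀ g : R, IsIdempotentElem g → g ≠ 0 → g ≠ 1 → IsUniquelyWeaklyNilClean g) :
    ∀ g : R, IsIdempotentElem g → ∀ x : R, g * x = x * g := by
  intro g hg x
  by_cases h0 : g = 0
  · simp [h0]
  by_cases h1 : g = 1
  · simp [h1]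
  have hgg : g * g = g := hg
  obtain ⟨-, huniq⟩ := h g hg h0 h1
  have h1g : (1 - g) * g = 0 := by rw [sub_mul, one_mul, hgg, sub_self]
  have hg1 : g * (1 - g) = 0 := by rw [mul_sub, mul_one, hgg, sub_self]
  -- generic step: given u with g*u = u, u*g = 0 (resp. symmetric), show u = 0.

  have step : ∀ u : R, g * u = u → u * g = 0 → u = 0 := by
    intro u hgu hug
    have huu : u * u = 0 := by
      have h' : u * (g * u) = u * u := by rw [hgu]
      rw [← h', ← mul_assoc, hug, zero_mul]
    have hf : IsIdempotentElem (g + u) := by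
      show (g + u) * (g + u) = g + u
      rw [add_mul, mul_add, mul_add, hgg, hgu, hug, huu, add_zero, add_zero]
    have hnil : IsNilpotent (g - (g + u)) := by
      refine ⟨2, ?_⟩
      have h'' : g - (g + u) = -u := by abel
      rw [h'', pow_two, neg_mul_neg, huu]
    have hsq := huniq 0 g (g - (g + u)) (g + u) (IsNilpotent.zero) (Or.inl hg) hnil
      (Or.inl hf) (by rw [zero_add]) (by abel)
    have hgeq : g = g + u := by
      have e1 : g ^ 2 = g := by rw [pow_two, hgg]
      have e2 : (g + u) ^ 2 = g + u := by rw [pow_two, hf]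
      rw [e1, e2] at hsq
      exact hsq
    exact (add_eq_left.mp hgeq.symm)
  have step' : ∀ u : R, u * g = u → g * u = 0 → u = 0 := by
    intro u hug hgu
    have huu : u * u = 0 := by
      have h' : (u * g) * u = u * u := by rw [hug]
      rw [← h', mul_assoc, hgu, mul_zero]
    have hf : IsIdempotentElem (g + u) := by
      show (g + u) * (g + u) = g + u
      rw [add_mul, mul_add, mul_add, hgg, hgu, hug, huu, add_zero, add_zero]
    have hnil : IsNilpotent (g - (g + u)) := by
      refine ⟨2, ?_⟩
      have h'' : g - (g + u) = -u := by abel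
      rw [h'', pow_two, neg_mul_neg, huu]
    have hsq := huniq 0 g (g - (g + u)) (g + u) (IsNilpotent.zero) (Or.inl hg) hnil
      (Or.inl hf) (by rw [zero_add]) (by abel)
    have hgeq : g = g + u := by
      have e1 : g ^ 2 = g := by rw [pow_two, hgg]
      have e2 : (g + u) ^ 2 = g + u := by rw [pow_two, hf]
      rw [e1, e2] at hsq
      exact hsq
    exact (add_eq_left.mp hgeq.symm)
  -- u := g * (x * (1 - g))
  have key1 : g * (x * (1 - g)) = 0 := by
    apply step
    · rw [← mul_assoc, hgg]
    · rw [mul_assoc, mul_assoc, h1g, mul_zero, mul_zero]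
  have key2 : (1 - g) * x * g = 0 := by
    apply step'
    · rw [mul_assoc ((1 - g) * x) g g, hgg]
    · rw [← mul_assoc g ((1 - g) * x) g, ← mul_assoc g (1 - g) x, hg1, zero_mul, zero_mul]
  have id1 : g * (x * (1 - g)) = g * x - g * x * g := by
    rw [mul_sub, mul_one, mul_sub g x (x * g), ← mul_assoc]
  have e1 : g * x = g * x * g := by
    rw [id1] at key1
    exact sub_eq_zero.mp key1
  have id2 : (1 - g) * x * g = x * g - g * (x * g) := by
    rw [sub_mul, one_mul, sub_mul, mul_assoc]
  have e2 : x * g = g * (x * g) := by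
    rw [id2] at key2
    exact sub_eq_zero.mp key2
  rw [e1, e2, mul_assoc]

lemma uwnc_unit_e (hab : ∀ g : R, IsIdempotentElem g → ∀ x : R, g * x = x * g)
    {a w e : R} (ha : IsUnit a) (hw : IsNilpotent w) (he : IsVeryIdempotent e)
    (hae : a = w + e) : e = 1 ∨ e = -1 := by
  obtain ⟨n, hwn⟩ := hw
  have hwn1 : w ^ (n + 1) = 0 := by rw [pow_succ, hwn, zero_mul]
  have main : ∀ f : R, f * f = f → e * (1 - f) = 0 → f = 1 := by
    intro f hf hef
    have hcf : (1 - f) * (1 - f) = 1 - f := by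
      rw [sub_mul, one_mul, mul_sub, mul_one, hf, sub_self, sub_zero]
    have hcm : ∀ y : R, (1 - f) * y = y * (1 - f) := by
      intro y
      rw [sub_mul, mul_sub, one_mul, mul_one, hab f hf y]
    have hac : a * (1 - f) = w * (1 - f) := by
      rw [hae, add_mul, hef, add_zero]
    have h2 : a ^ (n + 1) * (1 - f) = 0 := by
      rw [← uwnc_centIdem_pow' a (1 - f) hcf hcm n, hac,
        uwnc_centIdem_pow' w (1 - f) hcf hcm n, hwn1, zero_mul]
    obtain ⟨U, hU⟩ := ha.pow (n + 1)
    have : (1 : R) - f = ↑U⁻¹ * (a ^ (n + 1) * (1 - f)) := by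
      rw [← mul_assoc, ← hU, Units.inv_mul, one_mul]
    rw [h2, mul_zero] at this
    exact (sub_eq_zero.mp this).symm
  rcases he with hee | hee
  · left
    have hee' : e * e = e := hee
    exact main e hee' (by rw [mul_sub, mul_one, hee', sub_self])
  · right
    have hee' : (-e) * (-e) = -e := hee
    have hee2 : e * e = -e := by rwa [neg_mul_neg] at hee'
    have h0 : e * (1 - -e) = 0 := by
      rw [mul_sub, mul_one, mul_neg, hee2, neg_neg, sub_self]
    have hm := main (-e) hee' h0
    exact neg_eq_iff_eq_neg.mp hm

end Aux2

section Aux3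
variable {R : Type u} [Ring R]

lemma uwnc_dvd_choose (q n k : ℕ) (hq : 1 ≤ q) (hk1 : 1 ≤ k) (hkn : k ≤ n) :
    q ∣ (2 * q * n.factorial).choose k := by
  obtain ⟨d, hd⟩ := Nat.dvd_factorial hk1 hkn
  have hP1 : 1 ≤ 2 * q * n.factorial := by
    have := Nat.factorial_pos n
    show 0 < _
    positivity
  obtain ⟨P', hP'⟩ : ∃ P', 2 * q * n.factorial = P' + 1 := ⟨2 * q * n.factorial - 1, by omega⟩
  obtain ⟨k', hk'⟩ : ∃ k', k = k' + 1 := ⟨k - 1, by omega⟩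
  have h2 : 2 * q * n.factorial * P'.choose k' = (2 * q * n.factorial).choose k * k := by
    rw [hP', hk']
    exact Nat.add_one_mul_choose_eq P' k'
  have h3 : k * ((2 * q * n.factorial).choose k) = k * (2 * q * d * P'.choose k') := by
    rw [mul_comm k ((2 * q * n.factorial).choose k), ← h2, hd]
    ring
  have h4 := Nat.eq_of_mul_eq_mul_left (show 0 < k by omega) h3
  exact ⟨2 * d * P'.choose k', by rw [h4]; ring⟩

lemma uwnc_one_add_pow (w : R) (n q : ℕ) (hn : 1 ≤ n) (hq1 : 1 ≤ q) (hw : w ^ n = 0)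
    (hq : ((q : ℕ) : R) = 0) : (1 + w) ^ (2 * q * n.factorial) = 1 := by
  have hc : Commute w (1 : R) := Commute.one_right w
  rw [add_comm (1 : R) w, hc.add_pow (2 * q * n.factorial)]
  rw [Finset.sum_eq_single 0]
  · simp
  · intro k _ hk0
    rcases le_or_gt n k with h | h
    · have hwk : w ^ k = 0 := by
        rw [← Nat.sub_add_cancel h, pow_add, hw, mul_zero]
      rw [hwk, zero_mul, zero_mul]
    · obtain ⟨c, hc'⟩ := uwnc_dvd_choose q n k hq1 (Nat.one_le_iff_ne_zero.mpr hk0) h.le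
      rw [hc', Nat.cast_mul, hq, zero_mul, mul_zero]
  · intro h
    exact absurd (Finset.mem_range.mpr (Nat.succ_pos _)) h


lemma uwnc_norm (hab : ∀ g : R, IsIdempotentElem g → ∀ x : R, g * x = x * g)
    {e : R} (he : IsVeryIdempotent e) :
    ∃ ε f : R, (ε = 1 ∨ ε = -1) ∧ f * f = f ∧ (∀ y : R, f * y = y * f) ∧ e = ε * f := by
  rcases he with he | he
  · exact ⟨1, e, Or.inl rfl, he, hab e he, (one_mul e).symm⟩
  · exact ⟨-1, -e, Or.inr rfl, he, hab (-e) he, by rw [neg_mul, one_mul, neg_neg]⟩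

lemma uwnc_pow_split (w f ε : R) (hf : f * f = f) (hcm : ∀ y : R, f * y = y * f)
    (hεc : ∀ y : R, ε * y = y * ε) :
    ∀ m : ℕ, (w + ε * f) ^ m = (w + ε) ^ m * f + w ^ m * (1 - f) := by
  intro m
  induction m with
  | zero => simp
  | succ k ih =>
    have h1f : ∀ y : R, (1 - f) * y = y * (1 - f) := fun y => by
      rw [sub_mul, mul_sub, one_mul, mul_one, hcm]
    have hstep1 : f * (w + ε * f) = (w + ε) * f := by
      rw [mul_add, hcm w, hcm (ε * f), mul_assoc, hf, add_mul]
    have hftf : f * (1 - f) = 0 := by rw [mul_sub, mul_one, hf, sub_self]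
    have hstep2 : (1 - f) * (w + ε * f) = w * (1 - f) := by
      rw [mul_add, h1f w, h1f (ε * f), mul_assoc, hftf, mul_zero, add_zero]
    rw [pow_succ, ih, add_mul, mul_assoc, mul_assoc, hstep1, hstep2, ← mul_assoc, ← pow_succ,
      ← mul_assoc, ← pow_succ]

lemma uwnc_periodic_elem (hab : ∀ g : R, IsIdempotentElem g → ∀ x : R, g * x = x * g)
    {q : ℕ} (hq1 : 1 ≤ q) (hq : ((q : ℕ) : R) = 0)
    (a : R) (hdec : ∃ w e : R, IsNilpotent w ∧ IsVeryIdempotent e ∧ a = w + e) :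
    ∃ m n : ℕ, 0 < m ∧ 0 < n ∧ m ≠ n ∧ a ^ m = a ^ n := by
  obtain ⟨w, e, hw, he, hae⟩ := hdec
  obtain ⟨ε, f, hε, hf, hcm, hef⟩ := uwnc_norm hab he
  obtain ⟨n, hwn⟩ := hw
  have hwN : w ^ (n + 1) = 0 := by rw [pow_succ, hwn, zero_mul]
  set N := n + 1 with hN
  set P := 2 * q * N.factorial with hP
  have hP0 : 0 < P := by
    have := Nat.factorial_pos N
    positivity
  have hεc : ∀ y : R, ε * y = y * ε := by
    rcases hε with rfl | rfl <;> intro y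
    · rw [one_mul, mul_one]
    · rw [neg_mul, one_mul, mul_neg, mul_one]
  have hsplit := uwnc_pow_split w f ε hf hcm hεc
  have hpow1 : (w + ε) ^ P = 1 := by
    rcases hε with rfl | rfl
    · rw [add_comm]
      exact uwnc_one_add_pow w N q (by omega) hq1 hwN hq
    · have hnegw : (-w) ^ N = 0 := by rw [neg_pow, hwN, mul_zero]
      have h1 : (1 + -w) ^ P = 1 := uwnc_one_add_pow (-w) N q (by omega) hq1 hnegw hq
      have hbase : w + -1 = -(1 + -w) := by abel
      have hPeven : Even P := ⟨q * N.factorial, by rw [hP]; ring⟩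
      rw [hbase, hPeven.neg_pow, h1]
  refine ⟨N + P, N, by omega, by omega, by omega, ?_⟩
  have e1 := hsplit (N + P)
  have e2 := hsplit N
  rw [hef] at hae
  rw [hae]
  simp only [e1, e2, pow_add, hpow1, hwN, mul_one, zero_mul, add_zero]

end Aux3

section Aux4
variable {R : Type u} [Ring R]

lemma uwnc_char (hab : ∀ g : R, IsIdempotentElem g → ∀ x : R, g * x = x * g)
    (hdec3 : ∃ w e : R, IsNilpotent w ∧ IsVeryIdempotent e ∧ (3 : R) = w + e) :
    ∃ q : ℕ, 1 ≤ q ∧ ((q : ℕ) : R) = 0 := by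
  obtain ⟨w, e, hw, he, h3⟩ := hdec3
  obtain ⟨ε, f, hε, hf, hcm, hef⟩ := uwnc_norm hab he
  rw [hef] at h3
  obtain ⟨n, hwn⟩ := hw
  have hwN : w ^ (n + 1) = 0 := by rw [pow_succ, hwn, zero_mul]
  set N := n + 1 with hN
  have hweq : w = 3 - ε * f := by rw [h3]; abel
  have hcf : ∀ y : R, (1 - f) * y = y * (1 - f) := fun y => by
    rw [sub_mul, mul_sub, one_mul, mul_one, hcm]
  have hfN : ∀ m : ℕ, f ^ (m + 1) = f := by
    intro m
    induction m with
    | zero => simp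
    | succ k ih => rw [pow_succ, ih, hf]
  -- (3 - ε)^N * f = 0
  have hwf : w * f = ((3 : R) - ε) * f := by
    rw [hweq, sub_mul, sub_mul, mul_assoc, hf]
  have hcomm3ε : Commute ((3 : R) - ε) f := by
    have h3c : (3 : R) * f = f * 3 := by
      have := (Nat.cast_commute (3 : ℕ) f).eq
      simpa using this
    show ((3 : R) - ε) * f = f * ((3 : R) - ε)
    rw [sub_mul, mul_sub, h3c, hcm ε]
  have h1 : ((3 : R) - ε) ^ N * f = 0 := by
    have a1 : (w * f) ^ N = w ^ N * f := uwnc_centIdem_pow' w f hf hcm n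
    have a2 : (((3 : R) - ε) * f) ^ N = ((3 : R) - ε) ^ N * f ^ N := hcomm3ε.mul_pow N
    rw [hfN n] at a2
    rw [← a2, ← hwf, a1, hwN, zero_mul]
  -- 3^N * (1 - f) = 0
  have hffN : (1 - f) * (1 - f) = 1 - f := by
    rw [sub_mul, one_mul, mul_sub, mul_one, hf, sub_self, sub_zero]
  have hw1f : w * (1 - f) = (3 : R) * (1 - f) := by
    rw [hweq, sub_mul, mul_sub, mul_one, mul_assoc, mul_sub, mul_one, hf, sub_self, mul_zero,
      sub_zero]
  have hcomm31f : Commute (3 : R) (1 - f) := by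
    have := (Nat.cast_commute (3 : ℕ) (1 - f)).eq
    show (3 : R) * (1 - f) = (1 - f) * (3 : R)
    simpa using this
  have h2 : (3 : R) ^ N * (1 - f) = 0 := by
    have a1 : (w * (1 - f)) ^ N = w ^ N * (1 - f) := uwnc_centIdem_pow' w (1 - f) hffN hcf n
    have a2 : ((3 : R) * (1 - f)) ^ N = (3 : R) ^ N * (1 - f) ^ N := hcomm31f.mul_pow N
    have a3 : (1 - f) ^ N = 1 - f := by
      have : ∀ m : ℕ, (1 - f) ^ (m + 1) = 1 - f := by
        intro m
        induction m with
        | zero => simp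
        | succ k ih => rw [pow_succ, ih, hffN]
      exact this n
    rw [a3] at a2
    rw [← a2, ← hw1f, a1, hwN, zero_mul]
  refine ⟨12 ^ N, Nat.one_le_iff_ne_zero.mpr (by positivity), ?_⟩
  have hcast : ((12 ^ N : ℕ) : R) = (12 : R) ^ N := by push_cast [Nat.cast_pow]; ring_nf
  rw [hcast]
  have hsplit : (12 : R) ^ N = (12 : R) ^ N * f + (12 : R) ^ N * (1 - f) := by
    rw [← mul_add, add_sub_cancel, mul_one]
  have hu1f : (12 : R) ^ N * (1 - f) = 0 := by
    have h12 : (12 : R) = 4 * 3 := by norm_num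
    have hc : Commute (4 : R) (3 : R) := by
      show (4 : R) * 3 = 3 * 4
      norm_num
    rw [h12, hc.mul_pow, mul_assoc, h2, mul_zero]
  have huf : (12 : R) ^ N * f = 0 := by
    rcases hε with rfl | rfl
    · have h31 : (3 : R) - 1 = 2 := by norm_num
      rw [h31] at h1
      have h12 : (12 : R) = 6 * 2 := by norm_num
      have hc : Commute (6 : R) (2 : R) := by
        show (6 : R) * 2 = 2 * 6
        norm_num
      rw [h12, hc.mul_pow, mul_assoc, h1, mul_zero]
    · have h31 : (3 : R) - (-1) = 4 := by norm_num
      rw [h31] at h1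
      have h12 : (12 : R) = 3 * 4 := by norm_num
      have hc : Commute (3 : R) (4 : R) := by
        show (3 : R) * 4 = 4 * 3
        norm_num
      rw [h12, hc.mul_pow, mul_assoc, h1, mul_zero]
  rw [hsplit, huf, hu1f, add_zero]

end Aux4


theorem stmt2 (R : Type u) [Ring R] :
    UniquelyWeaklyNilCleanRing R ↔
      PeriodicRing R ∧
      (∀ a : R, IsZeroDivisorPair a → IsUniquelyWeaklyNilClean a) ∧
      {y : R | IsUnit y} = {y : R | ∃ x : R, IsNilpotent x ∧ (y = x + 1 ∨ y = x - 1)} := by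
  constructor
  · intro h
    have hab : ∀ g : R, IsIdempotentElem g → ∀ x : R, g * x = x * g :=
      uwnc_abelian_s2 (fun g _ _ _ => h g)
    obtain ⟨q, hq1, hq0⟩ := uwnc_char hab (h 3).1
    refine ⟨fun a => uwnc_periodic_elem hab hq1 hq0 a (h a).1, fun a _ => h a, ?_⟩
    ext y
    simp only [Set.mem_setOf_eq]
    constructor
    · intro hy
      obtain ⟨w, e, hw, he, hye⟩ := (h y).1
      rcases uwnc_unit_e hab hy hw he hye with he1 | he1
      · exact ⟨w, hw, Or.inl (by rw [hye, he1])⟩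
      · refine ⟨w, hw, Or.inr ?_⟩
        rw [hye, he1, sub_eq_add_neg]
    · rintro ⟨x, hx, rfl | rfl⟩
      · exact hx.isUnit_add_one
      · exact IsNilpotent.isUnit_sub_one hx
  · rintro ⟨h1, h2, h3⟩
    have hab : ∀ g : R, IsIdempotentElem g → ∀ x : R, g * x = x * g := by
      apply uwnc_abelian_s2
      intro g hg hg0 hg1
      apply h2
      have hgg : g * g = g := hg
      refine ⟨1 - g, 1 - g, ?_, ?_, ?_, ?_⟩
      · intro hc
        exact hg1 (by rwa [sub_eq_zero, eq_comm] at hc)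
      · intro hc
        exact hg1 (by rwa [sub_eq_zero, eq_comm] at hc)
      · rw [mul_sub, mul_one, hgg, sub_self]
      · rw [sub_mul, one_mul, hgg, sub_self]
    intro a
    by_cases ha : IsUnit a
    · constructor
      · have hmem : a ∈ {y : R | ∃ x : R, IsNilpotent x ∧ (y = x + 1 ∨ y = x - 1)} := by
          rw [← h3]
          exact ha
        obtain ⟨x, hx, hax | hax⟩ := hmem
        · exact ⟨x, 1, hx, Or.inl (mul_one 1), hax⟩
        · refine ⟨x, -1, hx, Or.inr ?_, by rw [hax, sub_eq_add_neg]⟩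
          show (-(-1) : R) * (-(-1)) = -(-1)
          norm_num
      · intro w₁ e₁ w₂ e₂ hw₁ he₁ hw₂ he₂ ha1 ha2
        rcases uwnc_unit_e hab ha hw₁ he₁ ha1 with rfl | rfl <;>
          rcases uwnc_unit_e hab ha hw₂ he₂ ha2 with rfl | rfl <;> norm_num
    · have key : ∀ m' n' : ℕ, 0 < n' → n' < m' → a ^ m' = a ^ n' → IsZeroDivisorPair a := by
        intro m' n' hn' hlt hp
        set k := m' - n' with hk
        have hk1 : 0 < k := by omega
        have hkn : a ^ n' * (a ^ k - 1) = 0 := by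
          rw [mul_sub, mul_one, ← pow_add, show n' + k = m' by omega, hp, sub_self]
        have hak : a ^ k - 1 ≠ 0 := by
          intro hc
          apply ha
          have hk' : a ^ k = 1 := by rwa [sub_eq_zero] at hc
          refine ⟨⟨a, a ^ (k - 1), ?_, ?_⟩, rfl⟩
          · show a * a ^ (k - 1) = 1
            rw [← pow_succ', show k - 1 + 1 = k from by omega, hk']
          · show a ^ (k - 1) * a = 1
            rw [← pow_succ, show k - 1 + 1 = k from by omega, hk']
        classical
        have hex : ∃ j, a ^ j * (a ^ k - 1) = 0 := ⟨n', hkn⟩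
        have hjspec := Nat.find_spec hex
        set j := Nat.find hex with hj
        have hj1 : 0 < j := by
          rcases Nat.eq_zero_or_pos j with h0 | hpos
          · exfalso
            apply hak
            rw [h0, pow_zero, one_mul] at hjspec
            exact hjspec
          · exact hpos
        have hjm : a ^ (j - 1) * (a ^ k - 1) ≠ 0 := Nat.find_min hex (by omega)
        refine ⟨a ^ (j - 1) * (a ^ k - 1), a ^ (j - 1) * (a ^ k - 1), hjm, hjm, ?_, ?_⟩
        · rw [← mul_assoc, ← pow_succ', show j - 1 + 1 = j from by omega]
          exact hjspec
        · have hcom : (a ^ k - 1) * a = a * (a ^ k - 1) := by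
            rw [sub_mul, mul_sub, mul_one, one_mul, ← pow_succ, ← pow_succ']
          rw [mul_assoc, hcom, ← mul_assoc, ← pow_succ, show j - 1 + 1 = j from by omega]
          exact hjspec
      obtain ⟨m, n, hm, hn, hmn, hpow⟩ := h1 a
      rcases Nat.lt_or_ge n m with hlt | hge
      · exact h2 a (key m n hn hlt hpow)
      · exact h2 a (key n m hm (by omega) hpow.symm)
end

section
/- Let R be a ring (associative with identity, not necessarily commutative) and let G be a group. If the group ring RG is uniquely weakly nil-clean, then so is R. -/
universe u v

lemma isVeryIdempotent_map {S : Type u} {T : Type v} [Ring S] [Ring T]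
    (f : S →+* T) {e : S} (he : IsVeryIdempotent e) : IsVeryIdempotent (f e) := by
  rcases he with he | he
  · exact Or.inl (by rw [IsIdempotentElem, ← map_mul, he])
  · exact Or.inr (by rw [IsIdempotentElem, ← map_neg, ← map_mul, he, map_neg])

theorem stmt3 (R : Type u) (G : Type v) [Ring R] [Group G]
    (h : UniquelyWeaklyNilCleanRing (MonoidAlgebra R G)) :
    UniquelyWeaklyNilCleanRing R := by
  set ι : R →+* MonoidAlgebra R G := MonoidAlgebra.singleOneRingHom
  set π : MonoidAlgebra R G →+* R :=
    MonoidAlgebra.liftNCRingHom (RingHom.id R) 1 (fun x y => by simp)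
  have hπι : ∀ a : R, π (ι a) = a := fun a => by
    simp [ι, π, MonoidAlgebra.singleOneRingHom, MonoidAlgebra.liftNCRingHom]
  intro a
  constructor
  · obtain ⟨⟨w, e, hw, he, heq⟩, -⟩ := h (ι a)
    refine ⟨π w, π e, hw.map π, isVeryIdempotent_map π he, ?_⟩
    have := congrArg π heq
    rwa [map_add, hπι] at this
  · intro w₁ e₁ w₂ e₂ hw₁ he₁ hw₂ he₂ h₁ h₂
    obtain ⟨-, huniq⟩ := h (ι a)
    have := huniq (ι w₁) (ι e₁) (ι w₂) (ι e₂) (hw₁.map ι) (isVeryIdempotent_map ι he₁)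
      (hw₂.map ι) (isVeryIdempotent_map ι he₂)
      (by rw [h₁, map_add]) (by rw [h₂, map_add])
    have := congrArg π this
    rwa [map_pow, map_pow, hπι, hπι] at this
end

section
/- Let R be a ring (associative with identity, not necessarily commutative) and let G be a group. If the augmentation ideal I(R,G) is nil (every element of I(R,G) is nilpotent), then the group ring RG is uniquely weakly nil-clean if and only if R is uniquely weakly nil-clean. -/
universe u v

/-- The augmentation homomorphism `ω : RG → R`, sending `Σ r_g g` to `Σ r_g`. -/
noncomputable def augmentation (R : Type u) (G : Type v) [Ring R] [Group G] :
    MonoidAlgebra R G →+* R :=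
  MonoidAlgebra.liftNCRingHom (RingHom.id R) 1 (fun _ _ => Commute.one_right _)

/-!
The augmentation `ω : RG → R` has the ring-hom section `σ : r ↦ r • 1`, so `R` is a retract of
`RG` and decompositions `a = w + e` pass from `RG` to `R`. Conversely, a decomposition of `ω x` in
`R` lifts along `σ`, the error lying in the nil ideal `ker ω`. For uniqueness, every idempotent
`f` of `RG` equals `σ (ω f)`: a uniquely weakly nil-clean ring is abelian, so `σ (ω f)` is a
central idempotent, and two commuting idempotents that differ by a nilpotent coincide.
-/

section UniquelyWeaklyNilClean

variable {A B : Type*} [Ring A] [Ring B]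

theorem IsVeryIdempotent.map (f : A →+* B) {e : A} (he : IsVeryIdempotent e) :
    IsVeryIdempotent (f e) := by
  rcases he with he | he
  · exact .inl (he.map f)
  · exact .inr (by simpa only [map_neg] using he.map f)

theorem IsVeryIdempotent.isIdempotentElem_sq {e : A} (he : IsVeryIdempotent e) :
    IsIdempotentElem (e ^ 2) := by
  rcases he with he | he
  · exact he.pow 2
  · simpa only [even_two.neg_pow] using he.pow 2

theorem IsIdempotentElem.mul_mul_one_sub_mul_self {e : A} (he : IsIdempotentElem e) (x : A) :
    e * x * (1 - e) * (e * x * (1 - e)) = 0 := by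
  rw [mul_assoc, ← mul_assoc (1 - e), ← mul_assoc (1 - e), he.one_sub_mul_self,
    zero_mul, zero_mul, mul_zero]

theorem IsIdempotentElem.add_mul_mul_one_sub {e : A} (he : IsIdempotentElem e) (x : A) :
    IsIdempotentElem (e + e * x * (1 - e)) := by
  have hleft : e * (e * x * (1 - e)) = e * x * (1 - e) := by
    rw [← mul_assoc, ← mul_assoc, he.eq]
  have hright : e * x * (1 - e) * e = 0 := by
    rw [mul_assoc, he.one_sub_mul_self, mul_zero]
  rw [IsIdempotentElem, mul_add, add_mul, add_mul, he.eq, hleft, hright,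
    he.mul_mul_one_sub_mul_self, add_zero, add_zero]

/-- Comparing `e = 0 + e` with `e = -u + (e + u)`. -/
theorem IsUniquelyWeaklyNilClean.eq_zero_of_isIdempotentElem_add {e u : A}
    (h : IsUniquelyWeaklyNilClean e) (he : IsIdempotentElem e)
    (heu : IsIdempotentElem (e + u)) (hu : u * u = 0) : u = 0 := by
  have hnil : IsNilpotent (-u) := ⟨2, by rw [sq, neg_mul_neg, hu]⟩
  have hsq := h.2 0 e (-u) (e + u) IsNilpotent.zero (.inl he) hnil (.inl heu)
    (zero_add e).symm (by abel)
  rwa [he.pow_eq two_ne_zero, heu.pow_eq two_ne_zero, left_eq_add] at hsq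

theorem UniquelyWeaklyNilCleanRing.mul_mul_one_sub_eq_zero (h : UniquelyWeaklyNilCleanRing A)
    {e : A} (he : IsIdempotentElem e) (x : A) : e * x * (1 - e) = 0 :=
  (h e).eq_zero_of_isIdempotentElem_add he (he.add_mul_mul_one_sub x)
    (he.mul_mul_one_sub_mul_self x)

theorem UniquelyWeaklyNilCleanRing.abelianRing (h : UniquelyWeaklyNilCleanRing A) :
    AbelianRing A := by
  intro e he x
  have h₁ : e * x * (1 - e) = 0 := h.mul_mul_one_sub_eq_zero he x
  have h₂ : (1 - e) * x * e = 0 := by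
    simpa only [sub_sub_cancel] using h.mul_mul_one_sub_eq_zero he.one_sub x
  rw [mul_sub, mul_one, sub_eq_zero] at h₁
  rw [sub_mul, sub_mul, one_mul, sub_eq_zero] at h₂
  exact h₁.trans h₂.symm

end UniquelyWeaklyNilClean

section Retract

variable {S R : Type*} [Ring S] [Ring R] (π : S →+* R) (σ : R →+* S)

theorem UniquelyWeaklyNilCleanRing.of_leftInverse (hπσ : Function.LeftInverse π σ)
    (h : UniquelyWeaklyNilCleanRing S) : UniquelyWeaklyNilCleanRing R := by
  intro a
  obtain ⟨⟨w, e, hw, he, hwe⟩, huniq⟩ := h (σ a)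
  refine ⟨⟨π w, π e, hw.map π, he.map π, by rw [← map_add, ← hwe, hπσ]⟩, ?_⟩
  intro w₁ e₁ w₂ e₂ hw₁ he₁ hw₂ he₂ h₁ h₂
  have hsq := huniq (σ w₁) (σ e₁) (σ w₂) (σ e₂) (hw₁.map σ) (he₁.map σ) (hw₂.map σ)
    (he₂.map σ) (by rw [h₁, map_add]) (by rw [h₂, map_add])
  simpa only [← map_pow, hπσ _] using congrArg π hsq

variable {π σ}

theorem isNilpotent_of_isNilpotent_map (hker : ∀ x ∈ RingHom.ker π, IsNilpotent x) {y : S}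
    (hy : IsNilpotent (π y)) : IsNilpotent y := by
  obtain ⟨n, hn⟩ := hy
  obtain ⟨m, hm⟩ := hker (y ^ n) (by rw [RingHom.mem_ker, map_pow, hn])
  exact ⟨n * m, by rw [pow_mul, hm]⟩

/-- `f` and `σ (π f)` are commuting idempotents whose difference lies in the nil ideal `ker π`. -/
theorem IsIdempotentElem.eq_of_leftInverse (hπσ : Function.LeftInverse π σ)
    (hker : ∀ x ∈ RingHom.ker π, IsNilpotent x)
    (hσ : Set.MapsTo σ (Subring.center R) (Subring.center S)) (hR : AbelianRing R)
    {f : S} (hf : IsIdempotentElem f) : f = σ (π f) := by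
  have hπf : IsIdempotentElem (π f) := hf.map π
  have hcenter : σ (π f) ∈ Subring.center S :=
    hσ (Subring.mem_center_iff.mpr fun x => (hR _ hπf x).symm)
  refine eq_of_isNilpotent_sub_of_isIdempotentElem_of_commute hf (hπf.map σ) ?_
    (Subring.mem_center_iff.mp hcenter f)
  exact hker _ (by rw [RingHom.mem_ker, map_sub, hπσ, sub_self])

theorem UniquelyWeaklyNilCleanRing.of_leftInverse_of_ker_isNilpotent
    (hπσ : Function.LeftInverse π σ) (hker : ∀ x ∈ RingHom.ker π, IsNilpotent x)
    (hσ : Set.MapsTo σ (Subring.center R) (Subring.center S))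
    (h : UniquelyWeaklyNilCleanRing R) : UniquelyWeaklyNilCleanRing S := by
  intro x
  obtain ⟨⟨w, e, hw, he, hwe⟩, huniq⟩ := h (π x)
  refine ⟨⟨x - σ e, σ e, isNilpotent_of_isNilpotent_map hker ?_, he.map σ, by abel⟩, ?_⟩
  · rwa [map_sub, hπσ, hwe, add_sub_cancel_right]
  intro w₁ e₁ w₂ e₂ hw₁ he₁ hw₂ he₂ h₁ h₂
  have hsq := huniq (π w₁) (π e₁) (π w₂) (π e₂) (hw₁.map π) (he₁.map π) (hw₂.map π)
    (he₂.map π) (by rw [h₁, map_add]) (by rw [h₂, map_add])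
  have rigid := fun {e : S} (he : IsVeryIdempotent e) =>
    he.isIdempotentElem_sq.eq_of_leftInverse hπσ hker hσ h.abelianRing
  rw [rigid he₁, rigid he₂, map_pow π, map_pow π, hsq]

end Retract

theorem leftInverse_augmentation_singleOneRingHom {R G : Type*} [Ring R] [Group G] :
    Function.LeftInverse (augmentation R G) MonoidAlgebra.singleOneRingHom := by
  intro r
  simp [augmentation]

theorem MonoidAlgebra.mapsTo_singleOneRingHom_center {R G : Type*} [Ring R] [Monoid G] :
    Set.MapsTo (singleOneRingHom : R →+* MonoidAlgebra R G) (Subring.center R)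
      (Subring.center (MonoidAlgebra R G)) := by
  intro r hr
  rw [SetLike.mem_coe, Subring.mem_center_iff] at hr ⊢
  intro x
  exact (single_commute (fun _ => .one_left _) (fun s => (hr s).symm) x).symm.eq

theorem stmt4 (R : Type u) (G : Type v) [Ring R] [Group G]
    (hnil : ∀ x : MonoidAlgebra R G, augmentation R G x = 0 → IsNilpotent x) :
    UniquelyWeaklyNilCleanRing (MonoidAlgebra R G) ↔ UniquelyWeaklyNilCleanRing R :=
  ⟨.of_leftInverse _ _ leftInverse_augmentation_singleOneRingHom,
    .of_leftInverse_of_ker_isNilpotent leftInverse_augmentation_singleOneRingHom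
      (fun x hx => hnil x (RingHom.mem_ker.mp hx)) MonoidAlgebra.mapsTo_singleOneRingHom_center⟩
end

section
/- Every uniquely weakly D-nil-clean ring is abelian; that is, if R is a ring (associative with identity) in which every zero-divisor is uniquely weakly nil-clean, then every idempotent of R is central. -/
universe u v

theorem stmt6 (R : Type u) [Ring R]
    (h : ∀ a : R, IsZeroDivisorPair a → IsUniquelyWeaklyNilClean a) :
    AbelianRing R := by
  intro e he x
  by_cases h0 : e = 0
  · simp [h0]
  by_cases h1 : e = 1
  · simp [h1]
  have hee : e * e = e := he
  have hL : ∀ y : R, e * (e * y) = e * y := fun y => by rw [← mul_assoc, hee]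
  have hne : (1 : R) - e ≠ 0 := fun hh => h1 (sub_eq_zero.mp hh).symm
  have hz : IsZeroDivisorPair e :=
    ⟨1 - e, 1 - e, hne, hne,
      by rw [mul_sub, mul_one, hee, sub_self],
      by rw [sub_mul, one_mul, hee, sub_self]⟩
  obtain ⟨-, huniq⟩ := h e hz
  have key : ∀ u : R, u * u = 0 → (e - u) * (e - u) = e - u → u = 0 := by
    intro u hu2 hidem
    have h5 := huniq u (e - u) 0 e ⟨2, by rw [sq, hu2]⟩ (Or.inl hidem)
      IsNilpotent.zero (Or.inl he) (by abel) (by rw [zero_add])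
    have h2 : (e - u) ^ 2 = e - u := by rw [sq]; exact hidem
    have h3 : e ^ 2 = e := by rw [sq, hee]
    have h4 : e - u = e := by rw [← h2, h5, h3]
    exact sub_eq_self.mp h4
  have hu : e * x - e * x * e = 0 := by
    apply key
    · simp only [mul_sub, sub_mul, mul_assoc, hee, hL]
      abel
    · simp only [mul_sub, sub_mul, mul_assoc, hee, hL]
      abel
  have hv : x * e - e * x * e = 0 := by
    apply key
    · simp only [mul_sub, sub_mul, mul_assoc, hee, hL]
      abel
    · simp only [mul_sub, sub_mul, mul_assoc, hee, hL]
      abel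
  rw [sub_eq_zero] at hu hv
  rw [hu, hv]
end

section
/- Let R be a ring (associative with identity) in which every element is either a very idempotent or nilpotent. Then R is abelian, i.e., every idempotent of R is central. -/
universe u v

lemma aux10 {R : Type u} [Ring R]
    (h : ∀ a : R, IsVeryIdempotent a ∨ IsNilpotent a)
    (e t : R) (het : e * t = t) (hte : t * e = 0) (ht : t * t = 0) : t = 0 := by
  rcases h (1 + t) with (h1 | h1) | ⟨n, hn⟩
  · have h2 : t + t = 0 + t := by
      unfold IsIdempotentElem at h1
      linear_combination (norm := noncomm_ring) h1 - ht
    exact add_right_cancel h2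
  · unfold IsIdempotentElem at h1
    have h3 : t + t + t + (1 + 1) = 0 := by
      linear_combination (norm := noncomm_ring) h1 - ht
    have h4 : t + t = 0 := by
      have := congrArg (· * t) h3
      simp only [add_mul, zero_mul] at this
      linear_combination (norm := noncomm_ring) this - 3 * ht
    have h5 : t = -(1+1) := by linear_combination (norm := noncomm_ring) h3 - h4
    calc t = e * t := het.symm
      _ = t * e := by rw [h5]; noncomm_ring
      _ = 0 := hte
  · have hu : (1 + t) * (1 - t) = 1 := by
      have : (1 + t) * (1 - t) = 1 - t * t := by noncomm_ring
      rw [this, ht, sub_zero]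
    have hc : Commute (1 + t) (1 - t) := by
      unfold Commute SemiconjBy
      noncomm_ring
    have h10 : (1 : R) = 0 := by
      calc (1 : R) = 1 ^ n := (one_pow n).symm
        _ = ((1 + t) * (1 - t)) ^ n := by rw [hu]
        _ = (1 + t) ^ n * (1 - t) ^ n := hc.mul_pow n
        _ = 0 := by rw [hn, zero_mul]
    calc t = t * 1 := (mul_one t).symm
      _ = t * 0 := by rw [h10]
      _ = 0 := mul_zero t

theorem stmt10 (R : Type u) [Ring R]
    (h : ∀ a : R, IsVeryIdempotent a ∨ IsNilpotent a) :
    AbelianRing R := by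
  intro e he x
  have hee : e * e = e := he
  have het : e * (e * x - e * x * e) = e * x - e * x * e := by
    linear_combination (norm := noncomm_ring) hee * x - hee * (x * e)
  have hte : (e * x - e * x * e) * e = 0 := by
    linear_combination (norm := noncomm_ring) -(e * x) * hee
  have ht : (e * x - e * x * e) * (e * x - e * x * e) = 0 := by
    linear_combination (norm := noncomm_ring) hte * x - hte * (x * e)
  have h1 : e * x - e * x * e = 0 := aux10 h e _ het hte ht
  have hes : e * (x * e - e * x * e) = 0 := by
    linear_combination (norm := noncomm_ring) -hee * (x * e)
  have het' : (1 - e) * (x * e - e * x * e) = x * e - e * x * e := by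
    linear_combination (norm := noncomm_ring) -hes
  have hte' : (x * e - e * x * e) * (1 - e) = 0 := by
    linear_combination (norm := noncomm_ring) (e * x) * hee - x * hee
  have ht' : (x * e - e * x * e) * (x * e - e * x * e) = 0 := by
    linear_combination (norm := noncomm_ring) x * hes - (e * x) * hes
  have h2 : x * e - e * x * e = 0 := aux10 h (1 - e) _ het' hte' ht'
  linear_combination (norm := noncomm_ring) h1 - h2
end

section
/- Let R be a ring (associative with identity, not necessarily commutative). Then R is an abelian ring in which every zero-divisor is an idempotent or nilpotent if and only if R is a D-ring or a Boolean ring. -/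
universe u v

lemma aux_idem_nilp {R : Type u} [MonoidWithZero R] (e : R)
    (he : IsIdempotentElem e) (hn : IsNilpotent e) : e = 0 := by
  obtain ⟨k, hk⟩ := hn
  rcases Nat.eq_zero_or_pos k with rfl | hkpos
  · have h1 : (1 : R) = 0 := by simpa using hk
    calc e = e * 1 := (mul_one e).symm
      _ = e * 0 := by rw [h1]
      _ = 0 := mul_zero e
  · have h := he.pow_succ_eq (k - 1)
    rw [Nat.sub_add_cancel hkpos] at h
    rw [← h, hk]

lemma aux_nilp_negsq {R : Type u} [Ring R] (x : R) (hn : IsNilpotent x)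
    (hx : x ^ 2 = -x) : x = 0 := by
  obtain ⟨k, hk⟩ := hn
  have hx2 : x * x = -x := by rw [← hx, sq]
  have key : ∀ m : ℕ, x ^ (m + 1) = (-1 : R) ^ m * x := by
    intro m
    induction m with
    | zero => simp
    | succ m ih =>
      rw [pow_succ, ih, mul_assoc, hx2, pow_succ, mul_assoc]
      simp
  have h0 : x ^ (k + 1) = 0 := by rw [pow_succ, hk, zero_mul]
  have hkey := key k
  rw [h0] at hkey
  have h1 : (-1:R)^k * ((-1:R)^k * x) = (-1:R)^k * 0 := by rw [← hkey]
  rwa [← mul_assoc, ← pow_add, ← two_mul, pow_mul, neg_one_sq, one_pow, one_mul,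
    mul_zero] at h1

lemma aux_corner {R : Type u} [Ring R]
    (hzd : ∀ a : R, IsZeroDivisorPair a → (IsIdempotentElem a ∨ IsNilpotent a))
    (e g : R) (he : IsIdempotentElem e) (hec : ∀ x : R, e * x = x * e)
    (hen : ¬ IsNilpotent e) (hg : g ≠ 0) (heg : e * g = 0) (hge : g * e = 0)
    (a : R) : IsIdempotentElem (e * a) := by
  set x := e * a with hxdef
  have hex : e * x = x := by rw [hxdef, ← mul_assoc, he.eq]
  have hxe : x * e = x := by rw [← hec, hex]
  have hxg : x * g = 0 := by
    rw [hxdef, hec a, mul_assoc, heg, mul_zero]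
  have hgx : g * x = 0 := by rw [hxdef, ← mul_assoc, hge, zero_mul]
  have hxzd : IsZeroDivisorPair x := ⟨g, g, hg, hg, hxg, hgx⟩
  rcases hzd x hxzd with hidem | hnil
  · exact hidem
  · have hexg : (e + x) * g = 0 := by rw [add_mul, heg, hxg, add_zero]
    have hgex : g * (e + x) = 0 := by rw [mul_add, hge, hgx, add_zero]
    rcases hzd (e + x) ⟨g, g, hg, hg, hexg, hgex⟩ with hid2 | hnil2
    · have hexp : (e + x) * (e + x) = e + x := hid2
      have hsum : e + x + (x + x * x) = e + x := by
        have h' : e * e + e * x + (x * e + x * x) = (e + x) * (e + x) := by noncomm_ring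
        rw [he.eq, hex, hxe, hexp] at h'
        exact h' 
      have h0 : x + x * x = 0 := by
        have := hsum
        rwa [add_eq_left] at this
      have hxx : x ^ 2 = -x := by rw [sq]; exact eq_neg_of_add_eq_zero_right h0
      have : x = 0 := aux_nilp_negsq x hnil hxx
      rw [this]; exact IsIdempotentElem.zero
    · exfalso
      apply hen
      have hcomm : Commute (e + x) (-x) := by
        have h' : (e + x) * x = x * (e + x) := by
          rw [add_mul, mul_add, hex, hxe]
        unfold Commute SemiconjBy
        rw [mul_neg, neg_mul, h']
      have := Commute.isNilpotent_add hcomm hnil2 hnil.neg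
      simpa using this

theorem stmt13 (R : Type u) [Ring R] :
    (AbelianRing R ∧ ∀ a : R, IsZeroDivisorPair a → (IsIdempotentElem a ∨ IsNilpotent a)) ↔
      ((∀ a : R, IsZeroDivisorPair a → IsNilpotent a) ∨ IsBooleanRing R) := by
  constructor
  · rintro ⟨habel, hzd⟩
    by_cases hD : ∀ a : R, IsZeroDivisorPair a → IsNilpotent a
    · exact Or.inl hD
    · right
      push_neg at hD
      obtain ⟨e, hezd, hen⟩ := hD
      have he : IsIdempotentElem e := by
        rcases hzd e hezd with h | h
        · exact h
        · exact absurd h hen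
      have hec : ∀ x : R, e * x = x * e := habel e he
      obtain ⟨b, c, hb, hc, heb, hce⟩ := hezd
      have he1 : e ≠ 1 := by
        rintro rfl; rw [one_mul] at heb; exact hb heb
      have hf : IsIdempotentElem (1 - e) := he.one_sub
      have hfc : ∀ x : R, (1 - e) * x = x * (1 - e) := habel (1 - e) hf
      have hfne : (1 - e : R) ≠ 0 := sub_ne_zero_of_ne (Ne.symm he1)
      have hene : e ≠ 0 := fun h => hen (h ▸ IsNilpotent.zero)
      have hfn : ¬ IsNilpotent (1 - e : R) := fun h => hfne (aux_idem_nilp _ hf h)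
      have hef : e * (1 - e) = 0 := by rw [mul_sub, mul_one, he.eq, sub_self]
      have hfe : (1 - e) * e = 0 := by rw [sub_mul, one_mul, he.eq, sub_self]
      intro a
      have h1 : IsIdempotentElem (e * a) :=
        aux_corner hzd e (1 - e) he hec hen hfne hef hfe a
      have h2 : IsIdempotentElem ((1 - e) * a) :=
        aux_corner hzd (1 - e) e hf hfc hfn hene hfe hef a
      have hsplit : a = e * a + (1 - e) * a := by noncomm_ring
      have hcross1 : (e * a) * ((1 - e) * a) = 0 := by
        rw [hec a, mul_assoc, ← mul_assoc e, hef, zero_mul, mul_zero]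
      have hcross2 : ((1 - e) * a) * (e * a) = 0 := by
        rw [hfc a, mul_assoc, ← mul_assoc (1 - e), hfe, zero_mul, mul_zero]
      show a * a = a
      calc a * a = (e * a + (1 - e) * a) * (e * a + (1 - e) * a) := by rw [← hsplit]
        _ = (e*a)*(e*a) + (e*a)*((1-e)*a) + ((1-e)*a)*(e*a) + ((1-e)*a)*((1-e)*a) := by
            noncomm_ring
        _ = e * a + (1 - e) * a := by rw [h1.eq, h2.eq, hcross1, hcross2]; abel
        _ = a := hsplit.symm
  · rintro (hD | hB)
    · constructor
      · intro e he x
        by_cases he1 : e = 1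
        · rw [he1, one_mul, mul_one]
        · by_cases he0 : e = 0
          · rw [he0, zero_mul, mul_zero]
          · exfalso
            have hfne : (1 - e : R) ≠ 0 := sub_ne_zero_of_ne (Ne.symm he1)
            have hef : e * (1 - e) = 0 := by rw [mul_sub, mul_one, he.eq, sub_self]
            have hfe : (1 - e) * e = 0 := by rw [sub_mul, one_mul, he.eq, sub_self]
            exact he0 (aux_idem_nilp _ he (hD e ⟨1 - e, 1 - e, hfne, hfne, hef, hfe⟩))
      · intro a ha; exact Or.inr (hD a ha)
    · constructor
      · have h2 : ∀ z : R, z + z = 0 := by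
          intro z
          have hz : z * z = z := hB z
          have key : (z + z) * (z + z) = z * z + z * z + (z * z + z * z) := by
            noncomm_ring
          rw [hz, (hB (z + z)).eq] at key
          have key2 := key.symm
          rwa [add_eq_left] at key2
        have hcomm : ∀ x y : R, x * y = y * x := by
          intro x y
          have hx : x * x = x := hB x
          have hy : y * y = y := hB y
          have key : x * x + y * y + (x * y + y * x) = (x + y) * (x + y) := by
            noncomm_ring
          rw [hx, hy, (hB (x + y)).eq] at key
          rw [add_eq_left] at key
          have h3 : -(y * x) = y * x := neg_eq_of_add_eq_zero_left (h2 (y * x))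
          rw [eq_neg_of_add_eq_zero_left key, h3]
        intro e _ x; exact hcomm e x
      · intro a _; exact Or.inl (hB a)
end

section
/- Every uniquely D-nil-clean ring is abelian; that is, if R is a ring (associative with identity) in which every zero-divisor is uniquely nil-clean, then every idempotent of R is central. -/
universe u v

lemma stmt14_aux {R : Type u} [Ring R]
    (h : ∀ a : R, IsZeroDivisorPair a → IsUniquelyNilClean a)
    (e t : R) (he : IsIdempotentElem e) (h1 : e ≠ 1)
    (het : e * t = t) (hte : t * e = 0) (ht2 : t * t = 0) : t = 0 := by
  have he' : e * e = e := he
  have hidem : IsIdempotentElem (e + t) := by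
    show (e + t) * (e + t) = e + t
    rw [mul_add, add_mul, add_mul, he', het, hte, ht2, add_zero, add_zero]
  have hb : (e + t) * (1 - e - t) = 0 := by
    rw [mul_sub, mul_sub, mul_one, add_mul, add_mul, he', het, hte, ht2,
      add_zero, add_zero]
    abel
  have hc : (1 - e) * (e + t) = 0 := by
    rw [sub_mul, one_mul, mul_add, he', het, sub_self]
  have hbne : (1 : R) - e - t ≠ 0 := by
    intro h0
    have ht1 : t = 1 - e := (sub_eq_zero.mp h0).symm
    have h2 : e * (1 - e) = 1 - e := by rw [← ht1, het]
    rw [mul_sub, mul_one, he', sub_self] at h2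
    exact h1 (sub_eq_zero.mp h2.symm).symm
  have hcne : (1 : R) - e ≠ 0 := fun h0 => h1 (sub_eq_zero.mp h0).symm
  have hzd : IsZeroDivisorPair (e + t) := ⟨1 - e - t, 1 - e, hbne, hcne, hb, hc⟩
  have huniq := (h _ hzd).2 t e 0 (e + t) ⟨2, by rw [pow_two, ht2]⟩ he
    (IsNilpotent.zero) hidem (add_comm e t) (zero_add _).symm
  have : e + 0 = e + t := by rw [add_zero]; exact huniq
  exact (add_left_cancel this).symm

theorem stmt14 (R : Type u) [Ring R]
    (h : ∀ a : R, IsZeroDivisorPair a → IsUniquelyNilClean a) :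
    AbelianRing R := by
  intro e he x
  rcases eq_or_ne e 1 with rfl | h1
  · simp
  rcases eq_or_ne e 0 with rfl | h0
  · simp
  have he' : e * e = e := he
  have h10 : (1 - e) * e = 0 := by rw [sub_mul, one_mul, he', sub_self]
  have h01 : e * (1 - e) = 0 := by rw [mul_sub, mul_one, he', sub_self]
  have ht : e * x * (1 - e) = 0 := by
    apply stmt14_aux h e _ he h1
    · rw [← mul_assoc, ← mul_assoc, he']
    · rw [mul_assoc, h10, mul_zero]
    · calc e * x * (1 - e) * (e * x * (1 - e))
          = e * x * ((1 - e) * e) * (x * (1 - e)) := by noncomm_ring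
        _ = 0 := by rw [h10, mul_zero, zero_mul]
  have hs : (1 - e) * x * e = 0 := by
    apply stmt14_aux h (1 - e) _ he.one_sub
    · intro h2; exact h0 (sub_eq_self.mp h2)
    · rw [← mul_assoc, ← mul_assoc, he.one_sub]
    · rw [mul_assoc, h01, mul_zero]
    · calc (1 - e) * x * e * ((1 - e) * x * e)
          = (1 - e) * x * (e * (1 - e)) * (x * e) := by noncomm_ring
        _ = 0 := by rw [h01, mul_zero, zero_mul]
  have h1' : e * x - e * x * e = 0 := by rw [mul_sub, mul_one] at ht; exact ht
  have h2' : x * e - e * (x * e) = 0 := by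
    rw [mul_assoc, sub_mul, one_mul] at hs; exact hs
  calc e * x = e * x * e := sub_eq_zero.mp h1'
    _ = x * e := by rw [mul_assoc]; exact (sub_eq_zero.mp h2').symm
end

section
/- A ring R (associative with identity) is uniquely D-nil-clean if and only if for every zero-divisor a ∈ R there exists a central idempotent e ∈ R such that a - e is nilpotent. -/
universe u v

/-!
Both conditions force every idempotent to be central. Given an idempotent `e` and any `x`,
the Peirce corners `t = e x (1 - e)` and `t = (1 - e) x e` are square-zero with `e t + t e = t`,
so `e + t` is again an idempotent, and a zero-divisor unless it equals `1`. Unique nil-cleanness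
of `e + t = t + e = 0 + (e + t)` then gives `t = 0`. Conversely, an idempotent `p ≠ 1` is a
zero-divisor, hence nilpotently close to, and commuting with, a central idempotent, so equal to it.
In an abelian ring two decompositions `w₁ + e₁ = w₂ + e₂` have commuting nilpotent parts, so
`e₁ - e₂ = w₂ - w₁` is nilpotent, and commuting idempotents with nilpotent difference coincide.
-/

section

variable {R : Type*} [Ring R]

lemma IsIdempotentElem.isZeroDivisorPair {p : R} (hp : IsIdempotentElem p) (h1 : p ≠ 1) :
    IsZeroDivisorPair p :=
  have h : 1 - p ≠ 0 := sub_ne_zero.mpr h1.symm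
  ⟨1 - p, 1 - p, h, h, hp.mul_one_sub_self, hp.one_sub_mul_self⟩

lemma IsIdempotentElem.add_of_mul_self_eq_zero {e t : R} (he : IsIdempotentElem e)
    (ht : t * t = 0) (hs : e * t + t * e = t) : IsIdempotentElem (e + t) :=
  calc (e + t) * (e + t) = e * e + (e * t + t * e) + t * t := by noncomm_ring
    _ = e + t := by rw [he.eq, hs, ht, add_zero]

lemma eq_zero_of_mul_self_eq_zero_of_add_eq_one {e t : R} (he : IsIdempotentElem e)
    (ht : t * t = 0) (h : e + t = 1) : t = 0 := by
  have ht' : IsIdempotentElem t := by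
    rw [eq_sub_of_add_eq' h]
    exact he.one_sub
  exact ht'.eq_zero_of_isNilpotent ⟨2, by rw [sq, ht]⟩

lemma abelianRing_of_forall_mul_self_eq_zero
    (hK : ∀ e t : R, IsIdempotentElem e → t * t = 0 → e * t + t * e = t → t = 0) :
    AbelianRing R := by
  intro e he x
  have hee : e * e = e := he
  have hee' : ∀ y : R, e * (e * y) = e * y := fun y => by rw [← mul_assoc, hee]
  have h₁ : e * x - e * x * e = 0 := hK e _ he
    (by simp only [sub_mul, mul_sub, mul_assoc, hee']; abel)
    (by simp only [sub_mul, mul_sub, mul_assoc, hee, hee']; abel)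
  have h₂ : x * e - e * x * e = 0 := hK e _ he
    (by simp only [sub_mul, mul_sub, mul_assoc, hee']; abel)
    (by simp only [sub_mul, mul_sub, mul_assoc, hee, hee']; abel)
  rw [sub_eq_zero] at h₁ h₂
  rw [h₁, h₂]

lemma abelianRing_of_forall_isUniquelyNilClean
    (H : ∀ a : R, IsZeroDivisorPair a → IsUniquelyNilClean a) : AbelianRing R := by
  refine abelianRing_of_forall_mul_self_eq_zero fun e t he ht hs => ?_
  have hp := he.add_of_mul_self_eq_zero ht hs
  by_cases h1 : e + t = 1
  · exact eq_zero_of_mul_self_eq_zero_of_add_eq_one he ht h1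
  have he_eq : e = e + t := (H _ (hp.isZeroDivisorPair h1)).2 t e 0 (e + t)
    ⟨2, by rw [sq, ht]⟩ he .zero hp (add_comm e t) (zero_add _).symm
  exact left_eq_add.mp he_eq

lemma abelianRing_of_forall_exists_central
    (H : ∀ a : R, IsZeroDivisorPair a →
      ∃ e : R, IsIdempotentElem e ∧ (∀ x : R, e * x = x * e) ∧ IsNilpotent (a - e)) :
    AbelianRing R := by
  intro p hp x
  by_cases h1 : p = 1
  · rw [h1, one_mul, mul_one]
  obtain ⟨f, hf, hfc, hn⟩ := H p (hp.isZeroDivisorPair h1)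
  rw [eq_of_isNilpotent_sub_of_isIdempotentElem_of_commute hp hf hn (hfc p).symm]
  exact hfc x

lemma AbelianRing.eq_of_add_eq_add (hR : AbelianRing R) {w₁ e₁ w₂ e₂ : R}
    (hw₁ : IsNilpotent w₁) (he₁ : IsIdempotentElem e₁) (hw₂ : IsNilpotent w₂)
    (he₂ : IsIdempotentElem e₂) (h : w₁ + e₁ = w₂ + e₂) : e₁ = e₂ := by
  have hd : e₁ - e₂ = w₂ - w₁ := by
    rw [sub_eq_sub_iff_add_eq_add, add_comm e₁ w₁]
    exact h
  have hw : Commute w₂ w₁ := by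
    rw [eq_add_of_sub_eq' hd.symm]
    exact (Commute.refl w₁).add_left (Commute.sub_left (hR e₁ he₁ w₁) (hR e₂ he₂ w₁))
  refine eq_of_isNilpotent_sub_of_isIdempotentElem_of_commute he₁ he₂ ?_ (hR e₁ he₁ e₂)
  rw [hd]
  exact hw.isNilpotent_sub hw₂ hw₁

end

theorem stmt15 (R : Type u) [Ring R] :
    (∀ a : R, IsZeroDivisorPair a → IsUniquelyNilClean a) ↔
      (∀ a : R, IsZeroDivisorPair a →
        ∃ e : R, IsIdempotentElem e ∧ (∀ x : R, e * x = x * e) ∧ IsNilpotent (a - e)) := by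
  constructor
  · intro H a ha
    obtain ⟨⟨w, e, hw, he, rfl⟩, -⟩ := H a ha
    refine ⟨e, he, abelianRing_of_forall_isUniquelyNilClean H e he, ?_⟩
    rwa [add_sub_cancel_right]
  · intro H a ha
    have hR := abelianRing_of_forall_exists_central H
    obtain ⟨e, he, -, hn⟩ := H a ha
    exact ⟨⟨a - e, e, hn, he, (sub_add_cancel a e).symm⟩,
      fun _ _ _ _ hw₁ he₁ hw₂ he₂ h₁ h₂ => hR.eq_of_add_eq_add hw₁ he₁ hw₂ he₂ (h₁.symm.trans h₂)⟩
end

section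
/- Let R be a ring (associative with identity, not necessarily commutative). Then R is uniquely nil-clean if and only if: (1) R is abelian; and (2) R/J(R) is a Boolean ring and J(R) is a nil ideal. -/
universe u v

/-!
In a uniquely nil-clean ring, if `e` is idempotent and `e * u + u * e = u`, `u * u = 0`, then
`e + u` is idempotent, and the two decompositions `e = 0 + e = (-u) + (e + u)` force `u = 0`;
with `u = e x (1 - e)` and `u = (1 - e) x e` this makes every idempotent central.

In an abelian ring, an idempotent `e = z * w` with `w` nilpotent satisfies `e = z ^ k * w ^ k`
for all `k ≥ 1`, hence vanishes. Writing an element as `n + e`, this kills `e` when the element is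
`y * w` with `w` nilpotent, or lies in `J(R)` (where `1 - a` has a left inverse). So nilpotents
lie in `J(R)`, `J(R)` is nil, and `a * a - a = n (n + 2e - 1)` lies in `J(R)`.

Conversely, idempotents lift modulo the nil ideal `J(R)`, and in an abelian ring two
decompositions `w₁ + e₁ = w₂ + e₂` give commuting idempotents with nilpotent difference
`e₁ - e₂ = w₂ - w₁`, which are therefore equal.
-/

section

variable {R : Type u} [Ring R]

def IsNilClean (a : R) : Prop :=
  ∃ w e : R, IsNilpotent w ∧ IsIdempotentElem e ∧ a = w + e

theorem IsIdempotentElem.eq_zero_of_eq_mul_of_isNilpotent {e w z : R}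
    (he : IsIdempotentElem e) (hw : IsNilpotent w) (hew : Commute e w) (h : e = z * w) :
    e = 0 := by
  have hpow : ∀ k, e = z ^ (k + 1) * w ^ (k + 1) := by
    intro k
    induction k with
    | zero => rwa [zero_add, pow_one, pow_one]
    | succ k ih =>
      calc e = z ^ (k + 1) * w ^ (k + 1) * e := by rw [← ih, he.eq]
        _ = z ^ (k + 1) * (z * w) * w ^ (k + 1) := by
          rw [mul_assoc, ← (hew.pow_right _).eq, ← h, mul_assoc]
        _ = z ^ (k + 2) * w ^ (k + 2) := by
          rw [pow_succ z (k + 1), pow_succ' w (k + 1)]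
          simp only [mul_assoc]
  obtain ⟨n, hn⟩ := hw
  rw [hpow n, pow_succ w, hn, zero_mul, mul_zero]

theorem UniquelyNilCleanRing.abelianRing (h : UniquelyNilCleanRing R) : AbelianRing R := by
  intro e he x
  have eq_zero : ∀ u : R, e * u + u * e = u → u * u = 0 → u = 0 := by
    intro u hu hu2
    have hidem : IsIdempotentElem (e + u) :=
      calc (e + u) * (e + u) = e * e + (e * u + u * e) + u * u := by noncomm_ring
        _ = e + u := by rw [he.eq, hu, hu2, add_zero]
    have hnil : IsNilpotent (-u) := ⟨2, by rw [pow_two, neg_mul_neg, hu2]⟩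
    have : e = e + u := (h e).2 0 e (-u) (e + u) .zero he hnil hidem (zero_add e).symm (by abel)
    exact left_eq_add.mp this
  have hl : e * x * (1 - e) = 0 := by
    refine eq_zero _ ?_ ?_
    · rw [mul_assoc (e * x), he.one_sub_mul_self, mul_zero, add_zero, ← mul_assoc, ← mul_assoc,
        he.eq]
    · rw [mul_assoc (e * x), ← mul_assoc (1 - e), ← mul_assoc (1 - e), he.one_sub_mul_self,
        zero_mul, zero_mul, mul_zero]
  have hr : (1 - e) * x * e = 0 := by
    refine eq_zero _ ?_ ?_
    · rw [← mul_assoc, ← mul_assoc, he.mul_one_sub_self, zero_mul, zero_mul, zero_add,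
        mul_assoc _ e, he.eq]
    · rw [mul_assoc ((1 - e) * x), ← mul_assoc e, ← mul_assoc e, he.mul_one_sub_self,
        zero_mul, zero_mul, mul_zero]
  rw [mul_one_sub, sub_eq_zero] at hl
  rw [mul_assoc, one_sub_mul, sub_eq_zero] at hr
  rw [hl, mul_assoc, ← hr]

theorem Ideal.exists_mul_one_sub_eq_one_of_mem_jacobson_bot {a : R}
    (ha : a ∈ Ideal.jacobson (⊥ : Ideal R)) : ∃ z : R, z * (1 - a) = 1 := by
  obtain ⟨z, hz⟩ := Ideal.mem_jacobson_iff.mp ha (-1)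
  rw [Ideal.mem_bot, sub_eq_zero] at hz
  exact ⟨z, by rw [mul_sub, mul_one, ← hz, mul_neg_one, neg_mul, neg_add_eq_sub]⟩

theorem Ideal.mem_jacobson_bot_of_forall_isNilpotent_mul {t : R}
    (h : ∀ y : R, IsNilpotent (y * t)) : t ∈ Ideal.jacobson (⊥ : Ideal R) := by
  refine Ideal.mem_jacobson_iff.mpr fun y => ?_
  obtain ⟨u, hu⟩ := (h y).isUnit_add_one
  refine ⟨↑u⁻¹, ?_⟩
  rw [Ideal.mem_bot, sub_eq_zero, mul_assoc, ← mul_add_one, ← hu, u.inv_mul]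

namespace AbelianRing

variable (hab : AbelianRing R) (hnc : ∀ a : R, IsNilClean a)
include hab hnc

theorem isNilpotent_mul_left {w : R} (hw : IsNilpotent w) (y : R) : IsNilpotent (y * w) := by
  obtain ⟨n, e, hn, he, hyw⟩ := hnc (y * w)
  obtain ⟨u, hu⟩ := hn.isUnit_one_add
  have heu : Commute e u := hu ▸ hab e he _
  have : e = (↑u⁻¹ * e * y) * w := by
    calc e = ↑u⁻¹ * (e * ↑u) := by rw [heu.eq, ← mul_assoc, u.inv_mul, one_mul]
      _ = ↑u⁻¹ * (e * (y * w)) := by rw [hu, hyw, mul_add e n, he.eq, mul_one_add, add_comm]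
      _ = (↑u⁻¹ * e * y) * w := by simp only [mul_assoc]
  rw [hyw, he.eq_zero_of_eq_mul_of_isNilpotent hw (hab e he w) this, add_zero]
  exact hn

theorem mem_jacobson_of_isNilpotent {t : R} (ht : IsNilpotent t) :
    t ∈ Ideal.jacobson (⊥ : Ideal R) :=
  Ideal.mem_jacobson_bot_of_forall_isNilpotent_mul (isNilpotent_mul_left hab hnc ht)

theorem isNilpotent_of_mem_jacobson {a : R} (ha : a ∈ Ideal.jacobson (⊥ : Ideal R)) :
    IsNilpotent a := by
  obtain ⟨n, e, hn, he, rfl⟩ := hnc a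
  obtain ⟨z, hz⟩ := Ideal.exists_mul_one_sub_eq_one_of_mem_jacobson_bot ha
  have : e = -(z * e) * n :=
    calc e = z * (1 - (n + e)) * e := by rw [hz, one_mul]
      _ = z * (e - e * n - e * e) := by rw [mul_assoc, ← hab e he]; noncomm_ring
      _ = -(z * e) * n := by rw [he.eq]; noncomm_ring
  rw [he.eq_zero_of_eq_mul_of_isNilpotent hn (hab e he n) this, add_zero]
  exact hn

theorem mul_self_sub_mem_jacobson (a : R) : a * a - a ∈ Ideal.jacobson (⊥ : Ideal R) := by
  obtain ⟨n, e, hn, he, rfl⟩ := hnc a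
  have hne : Commute n e := (hab e he n).symm
  have : (n + e) * (n + e) - (n + e) = n * (n + e + e - 1) :=
    calc (n + e) * (n + e) - (n + e) = n * n + n * e + e * n + e * e - n - e := by noncomm_ring
      _ = n * (n + e + e - 1) := by rw [he.eq, ← hne.eq]; noncomm_ring
  rw [this]
  exact mem_jacobson_of_isNilpotent hab hnc
    ((((Commute.refl n).add_right hne).add_right hne).sub_right (.one_right n)
      |>.isNilpotent_mul_right hn)

theorem isBooleanRing_quotient_jacobson : IsBooleanRing (R ⧸ Ideal.jacobson (⊥ : Ideal R)) := by
  intro s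
  obtain ⟨a, rfl⟩ := Ideal.Quotient.mk_surjective s
  exact (map_mul _ a a).symm.trans (Ideal.Quotient.eq.mpr (mul_self_sub_mem_jacobson hab hnc a))

end AbelianRing

theorem quotJacobsonIsoTo_quotient : QuotJacobsonIsoTo R (R ⧸ Ideal.jacobson (⊥ : Ideal R)) :=
  ⟨Ideal.Quotient.mk _, Ideal.Quotient.mk_surjective, fun _ => Ideal.Quotient.eq_zero_iff_mem⟩

theorem isNilClean_of_ker_isNilpotent {S : Type v} [Ring S] (f : R →+* S) (hS : IsBooleanRing S)
    (hker : ∀ x ∈ RingHom.ker f, IsNilpotent x) (a : R) : IsNilClean a := by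
  obtain ⟨e, he, hfe⟩ :=
    exists_isIdempotentElem_eq_of_ker_isNilpotent f hker (f a) ⟨a, rfl⟩ (hS (f a))
  refine ⟨a - e, e, hker _ ?_, he, (sub_add_cancel a e).symm⟩
  rw [RingHom.mem_ker, map_sub, hfe, sub_self]

theorem AbelianRing.isUniquelyNilClean (hab : AbelianRing R) {a : R} (ha : IsNilClean a) :
    IsUniquelyNilClean a := by
  refine ⟨ha, fun w₁ e₁ w₂ e₂ hw₁ he₁ hw₂ he₂ h₁ h₂ => ?_⟩
  have hw : Commute w₂ w₁ := by
    rw [show w₁ = w₂ + e₂ - e₁ by rw [← h₂, h₁, add_sub_cancel_right]]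
    exact ((Commute.refl w₂).add_right (hab e₂ he₂ w₂).symm).sub_right (hab e₁ he₁ w₂).symm
  have hsub : e₁ - e₂ = w₂ - w₁ := by
    rw [sub_eq_sub_iff_add_eq_add, add_comm, ← h₁, h₂]
  refine eq_of_isNilpotent_sub_of_isIdempotentElem_of_commute he₁ he₂ ?_ (hab e₁ he₁ e₂)
  rw [hsub]
  exact hw.isNilpotent_sub hw₂ hw₁

end

theorem stmt18 (R : Type u) [Ring R] :
    UniquelyNilCleanRing R ↔
      AbelianRing R ∧
        (∃ (S : Type u) (_ : Ring S), IsBooleanRing S ∧ QuotJacobsonIsoTo R S) ∧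
        (∀ a ∈ Ideal.jacobson (⊥ : Ideal R), IsNilpotent a) := by
  constructor
  · intro h
    have hab : AbelianRing R := UniquelyNilCleanRing.abelianRing h
    have hnc : ∀ a : R, IsNilClean a := fun a => (h a).1
    exact ⟨hab, ⟨_, inferInstance, AbelianRing.isBooleanRing_quotient_jacobson hab hnc,
      quotJacobsonIsoTo_quotient⟩, fun _ => AbelianRing.isNilpotent_of_mem_jacobson hab hnc⟩
  · rintro ⟨hab, ⟨S, _, hS, f, -, hf⟩, hnil⟩ a
    exact AbelianRing.isUniquelyNilClean hab
      (isNilClean_of_ker_isNilpotent f hS (fun x hx => hnil x ((hf x).mp hx)) a)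
end
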